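/- arXiv:math/9807021 — 10 statements merged into one kernel-verified Lean document; each statement's English description precedes it below -/
import Mathlib

section
/- For all natural numbers m ≥ 2 and n with n > 4m² − 6m and m ∣ n, every tournament on n vertices admits an m-star-factor. -/
/-- A tournament on Fin n: the relation is asymmetric and total on distinct pairs. -/
def IsTournament {n : ℕ} (r : Fin n → Fin n → Prop) : Prop :=
  (∀ u v : Fin n, r u v → ¬ r v u) ∧ (∀ u v : Fin n, u ≠ v → r u v ∨ r v u)

/-- An m-star: an m-element vertex set with a center dominating all other members. -/
def IsMStar {n : ℕ} (r : Fin n → Fin n → Prop) (m : ℕ) (S : Finset (Fin n)) : Prop :=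
  S.card = m ∧ ∃ c ∈ S, ∀ v ∈ S, v ≠ c → r c v

/-- An m-star-factor: a partition of the vertex set into pairwise disjoint m-stars. -/
def HasStarFactor {n : ℕ} (r : Fin n → Fin n → Prop) (m : ℕ) : Prop :=
  ∃ P : Finset (Finset (Fin n)), (∀ S ∈ P, IsMStar r m S) ∧
    (P : Set (Finset (Fin n))).PairwiseDisjoint id ∧ P.biUnion id = Finset.univ

/-!
A vertex `v` of maximum out-degree dominates about `n / 2` vertices; keep a multiple of `m` of
them as `A` and call the other vertices `B`, so that `#B ≡ -1 (mod m)`. In a tournament every set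
of at least `2 (m - 1)` vertices contains a vertex dominating `m - 1` others of the set, so stars
can be peeled off `B` greedily until `m - 1` vertices are left. Each of these, `x`, is absorbed
into a star using `m - 1` vertices of `A`: either `x` dominates `m - 1` of them, or more than
`2 (m - 2)` of them dominate `x` and the best of those is the center of a star through `x`. What
is left of `A` is again `≡ -1 (mod m)`, is peeled greedily, and its last `m - 1` vertices form a
star centered at `v`. The bound on `n` leaves `A` large enough for the absorption.
-/

open Finset

theorem Finset.exists_subset_card_eq_of_le_card_filter {α : Type*} {s : Finset α} {p : α → Prop}
    [DecidablePred p] {k : ℕ} (h : k ≤ #{u ∈ s | p u}) : ∃ t ⊆ s, #t = k ∧ ∀ u ∈ t, p u := by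
  obtain ⟨t, hts, rfl⟩ := exists_subset_card_eq h
  exact ⟨t, hts.trans (filter_subset _ _), rfl, fun u hu => (mem_filter.mp (hts hu)).2⟩

section StarFactorOn

variable {N : ℕ} {r : Fin N → Fin N → Prop} {m : ℕ}

def HasStarFactorOn (r : Fin N → Fin N → Prop) (m : ℕ) (U : Finset (Fin N)) : Prop :=
  ∃ P : Finset (Finset (Fin N)), (∀ S ∈ P, IsMStar r m S) ∧
    (P : Set (Finset (Fin N))).PairwiseDisjoint id ∧ P.biUnion id = U

theorem hasStarFactorOn_empty : HasStarFactorOn r m ∅ :=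
  ⟨∅, by simp, by simp, by simp⟩

theorem IsMStar.hasStarFactorOn {S : Finset (Fin N)} (hS : IsMStar r m S) :
    HasStarFactorOn r m S :=
  ⟨{S}, by simpa using hS, by simp, by simp⟩

theorem HasStarFactorOn.union {U W : Finset (Fin N)} (hU : HasStarFactorOn r m U)
    (hW : HasStarFactorOn r m W) (hUW : Disjoint U W) : HasStarFactorOn r m (U ∪ W) := by
  obtain ⟨P, hP, hPdisj, rfl⟩ := hU
  obtain ⟨Q, hQ, hQdisj, rfl⟩ := hW
  refine ⟨P ∪ Q, fun S hS => (mem_union.mp hS).elim (hP S) (hQ S), ?_, union_biUnion⟩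
  rw [coe_union]
  exact hPdisj.union hQdisj fun S hS T hT _ =>
    hUW.mono (subset_biUnion_of_mem id hS) (subset_biUnion_of_mem id hT)

end StarFactorOn

namespace IsTournament

variable {N : ℕ} {r : Fin N → Fin N → Prop}

theorem irrefl (hr : IsTournament r) (v : Fin N) : ¬ r v v := fun h => hr.1 v v h h

theorem isMStar_insert (hr : IsTournament r) {c : Fin N} {L : Finset (Fin N)}
    (hL : ∀ u ∈ L, r c u) : IsMStar r (#L + 1) (insert c L) := by
  refine ⟨card_insert_of_notMem fun hc => hr.irrefl c (hL c hc), c, mem_insert_self c L, ?_⟩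
  intro v hv hvc
  exact hL v ((mem_insert.mp hv).resolve_left hvc)

variable [DecidableRel r]

theorem card_out_add_card_in (hr : IsTournament r) (s : Finset (Fin N)) (v : Fin N) :
    #{u ∈ s | r v u} + #{u ∈ s | r u v} = #(s.erase v) := by
  rw [← card_filter_add_card_filter_not (s := s.erase v) (r v ·)]
  have := hr.irrefl v
  congr 2 <;> ext u <;> simp only [mem_filter, mem_erase]
  · grind
  · have := hr.1 u v; have := hr.2 v u; grind

theorem two_mul_sum_card_out (hr : IsTournament r) (s : Finset (Fin N)) :
    2 * ∑ v ∈ s, #{u ∈ s | r v u} = #s * (#s - 1) := by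
  have h_in : ∑ v ∈ s, #{u ∈ s | r u v} = ∑ v ∈ s, #{u ∈ s | r v u} := by
    simp only [card_filter]
    exact sum_comm
  calc 2 * ∑ v ∈ s, #{u ∈ s | r v u}
      = ∑ v ∈ s, (#{u ∈ s | r v u} + #{u ∈ s | r u v}) := by rw [sum_add_distrib, h_in]; ring
    _ = ∑ v ∈ s, (#s - 1) := sum_congr rfl fun v hv => by
          rw [hr.card_out_add_card_in, card_erase_of_mem hv]
    _ = #s * (#s - 1) := by rw [sum_const, smul_eq_mul]

theorem exists_card_sub_one_le_two_mul_card_out (hr : IsTournament r) {s : Finset (Fin N)}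
    (hs : s.Nonempty) : ∃ c ∈ s, #s - 1 ≤ 2 * #{u ∈ s | r c u} := by
  refine exists_le_of_sum_le hs ?_
  rw [← mul_sum, hr.two_mul_sum_card_out, sum_const, smul_eq_mul]

variable {m : ℕ}

theorem exists_hasStarFactorOn_sdiff (hr : IsTournament r) (hm : 0 < m) (B : Finset (Fin N))
    (hB : m ∣ #B + 1) : ∃ X ⊆ B, #X = m - 1 ∧ HasStarFactorOn r m (B \ X) := by
  induction B using Finset.strongInduction with
  | H B ih =>
  by_cases hsmall : #B + 1 < 2 * m
  · have := Nat.eq_of_dvd_of_lt_two_mul (Nat.succ_ne_zero _) hB hsmall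
    exact ⟨B, subset_rfl, by omega, by simpa using hasStarFactorOn_empty⟩
  obtain ⟨c, hcB, hc⟩ :=
    hr.exists_card_sub_one_le_two_mul_card_out (s := B) (card_pos.mp (by omega))
  have hc' : m - 1 ≤ #{u ∈ B | r c u} := by omega
  obtain ⟨L, hLB, hL, hcL⟩ := exists_subset_card_eq_of_le_card_filter hc'
  have hS : IsMStar r m (insert c L) := by
    simpa [hL, Nat.sub_add_cancel hm] using hr.isMStar_insert hcL
  have hSB : insert c L ⊆ B := insert_subset hcB hLB
  have hrest : m ∣ #(B \ insert c L) + 1 := by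
    rw [card_sdiff_of_subset hSB, hS.1]
    simpa [show #B + 1 - m = #B - m + 1 by omega] using Nat.dvd_sub hB (dvd_refl m)
  obtain ⟨X, hXB, hX, hfac⟩ := ih _ (sdiff_ssubset hSB (insert_nonempty _ _)) hrest
  refine ⟨X, hXB.trans sdiff_subset, hX, ?_⟩
  convert hS.hasStarFactorOn.union hfac (disjoint_sdiff.mono_right sdiff_subset) using 1
  grind

theorem exists_isMStar_insert (hr : IsTournament r) (hm : 2 ≤ m) {x : Fin N}
    {A : Finset (Fin N)} (hx : x ∉ A) (hA : (m - 1) + 2 * (m - 2) ≤ #A) :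
    ∃ C ⊆ A, #C = m - 1 ∧ IsMStar r m (insert x C) := by
  by_cases hout : m - 1 ≤ #{u ∈ A | r x u}
  · obtain ⟨C, hCA, hC, hxC⟩ := exists_subset_card_eq_of_le_card_filter hout
    refine ⟨C, hCA, hC, ?_⟩
    simpa [hC, Nat.sub_add_cancel (by omega : 1 ≤ m)] using hr.isMStar_insert hxC
  have hin : 2 * (m - 2) < #{u ∈ A | r u x} := by
    have := hr.card_out_add_card_in A x
    rw [erase_eq_of_notMem hx] at this
    omega
  obtain ⟨c, hcD, hc⟩ :=
    hr.exists_card_sub_one_le_two_mul_card_out (s := {u ∈ A | r u x}) (card_pos.mp (by omega))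
  have hc' : m - 2 ≤ #{u ∈ {u ∈ A | r u x} | r c u} := by omega
  obtain ⟨L, hLD, hL, hcL⟩ := exists_subset_card_eq_of_le_card_filter hc'
  obtain ⟨hcA, hcx⟩ := mem_filter.mp hcD
  have hLA : L ⊆ A := hLD.trans (filter_subset _ _)
  have hxL : x ∉ L := fun h => hx (hLA h)
  have hcL' : c ∉ L := fun h => hr.irrefl c (hcL c h)
  refine ⟨insert c L, insert_subset hcA hLA, by rw [card_insert_of_notMem hcL', hL]; omega, ?_⟩
  have hS := hr.isMStar_insert (forall_mem_insert _ _ _ |>.mpr ⟨hcx, hcL⟩)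
  rwa [card_insert_of_notMem hxL, hL, show m - 2 + 1 + 1 = m by omega, insert_comm] at hS

theorem exists_hasStarFactorOn_union (hr : IsTournament r) (hm : 2 ≤ m) (X : Finset (Fin N))
    {A : Finset (Fin N)} (hXA : Disjoint X A) (hA : (m - 1) * #X + 2 * (m - 2) ≤ #A) :
    ∃ C ⊆ A, #C = (m - 1) * #X ∧ HasStarFactorOn r m (X ∪ C) := by
  induction X using Finset.induction_on generalizing A with
  | empty => exact ⟨∅, empty_subset _, by simp, by simpa using hasStarFactorOn_empty⟩
  | insert x X hxX ih =>
    rw [disjoint_insert_left] at hXA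
    rw [card_insert_of_notMem hxX, mul_add_one] at hA ⊢
    obtain ⟨C₁, hC₁A, hC₁, hS⟩ := hr.exists_isMStar_insert hm hXA.1 (by omega)
    obtain ⟨C, hCA, hC, hfac⟩ := ih (A := A \ C₁) (disjoint_of_subset_right sdiff_subset hXA.2)
      (by rw [card_sdiff_of_subset hC₁A]; omega)
    have hC₁C : Disjoint C₁ C := disjoint_of_subset_right hCA disjoint_sdiff
    refine ⟨C₁ ∪ C, union_subset hC₁A (hCA.trans sdiff_subset), ?_, ?_⟩
    · rw [card_union_of_disjoint hC₁C, hC₁, hC, add_comm]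
    have hdisj : Disjoint (insert x C₁) (X ∪ C) := by
      have := hXA.2
      have : ∀ u ∈ C, u ∈ A := fun u hu => (mem_sdiff.mp (hCA hu)).1
      rw [disjoint_left] at *
      grind
    convert hS.hasStarFactorOn.union hfac hdisj using 1
    grind

theorem hasStarFactorOn_insert_union (hr : IsTournament r) (hm : 2 ≤ m) {v : Fin N}
    {A B : Finset (Fin N)} (hvA : ∀ u ∈ A, r v u) (hvB : v ∉ B) (hAB : Disjoint A B)
    (hA : m ∣ #A) (hB : m ∣ #B + 1) (hA_card : (m - 1) * (m - 1) + 2 * (m - 2) ≤ #A) :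
    HasStarFactorOn r m (insert v (A ∪ B)) := by
  obtain ⟨X, hXB, hX, hBX⟩ := hr.exists_hasStarFactorOn_sdiff (by omega) B hB
  obtain ⟨C, hCA, hC, hXC⟩ :=
    hr.exists_hasStarFactorOn_union hm X (hAB.symm.mono_left hXB) (by rwa [hX])
  have hAC : m ∣ #(A \ C) + 1 := by
    have hsq : (m - 1) * (m - 1) = m * (m - 2) + 1 := by
      zify [(by omega : 1 ≤ m), hm]
      ring
    rw [card_sdiff_of_subset hCA, hC, hX,
      show #A - (m - 1) * (m - 1) + 1 = #A - m * (m - 2) by omega]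
    exact Nat.dvd_sub hA (dvd_mul_right m _)
  obtain ⟨F, hFAC, hF, hACF⟩ := hr.exists_hasStarFactorOn_sdiff (by omega) _ hAC
  have hFA : ∀ u ∈ F, u ∈ A := fun u hu => (mem_sdiff.mp (hFAC hu)).1
  have hS : IsMStar r m (insert v F) := by
    simpa [hF, Nat.sub_add_cancel (by omega : 1 ≤ m)] using
      hr.isMStar_insert fun u hu => hvA u (hFA u hu)
  have hvA' : v ∉ A := fun h => hr.irrefl v (hvA v h)
  have hXB' : ∀ u ∈ X, u ∈ B := fun u hu => hXB hu
  have hCA' : ∀ u ∈ C, u ∈ A := fun u hu => hCA hu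
  have hFAC' : ∀ u ∈ F, u ∈ A \ C := fun u hu => hFAC hu
  rw [disjoint_left] at hAB
  convert (hBX.union hXC ?_).union (hACF.union hS.hasStarFactorOn ?_) ?_ using 1
  · grind
  all_goals rw [disjoint_left]; grind

end IsTournament

theorem star_factor_upper_bound (m n : ℕ) (hm : 2 ≤ m)
    (hn : 4 * m ^ 2 - 6 * m < n) (hdvd : m ∣ n)
    (r : Fin n → Fin n → Prop) (hr : IsTournament r) :
    HasStarFactor r m := by
  classical
  have hn' : m * (4 * m - 5) ≤ n := by
    obtain ⟨q, rfl⟩ := hdvd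
    rw [show 4 * m ^ 2 - 6 * m = m * (4 * m - 6) by
      rw [Nat.mul_sub, sq, mul_left_comm, mul_comm m 6]] at hn
    exact Nat.mul_le_mul_left m (by have := Nat.lt_of_mul_lt_mul_left hn; omega)
  have hn0 : 0 < n := lt_of_le_of_lt (Nat.zero_le _) hn
  obtain ⟨v, -, hv⟩ :=
    hr.exists_card_sub_one_le_two_mul_card_out (s := univ) (univ_nonempty_iff.mpr ⟨⟨0, hn0⟩⟩)
  obtain ⟨A, hAv, hA⟩ := exists_subset_card_eq (Nat.div_mul_le_self #{u | r v u} m)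
  have hvA : ∀ u ∈ A, r v u := fun u hu => (mem_filter.mp (hAv hu)).2
  have hvA' : v ∉ A := fun h => hr.irrefl v (hvA v h)
  have hcard : #A + (#(univ \ insert v A) + 1) = n := by
    have := card_sdiff_add_card_eq_card (subset_univ (insert v A))
    rw [card_insert_of_notMem hvA', card_univ, Fintype.card_fin] at this
    omega
  have hmA : m ∣ #A := hA ▸ dvd_mul_left m _
  have hA_card : (m - 1) * (m - 1) + 2 * (m - 2) ≤ #A := by
    have hAm : #{u | r v u} < #A + m := hA ▸ Nat.lt_div_mul_add (by omega)
    have hvn : n ≤ 2 * #{u | r v u} + 1 := by rw [card_univ, Fintype.card_fin] at hv; omega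
    zify [(by omega : 1 ≤ m), hm, (by omega : 5 ≤ 4 * m)] at hAm hvn hn' ⊢
    nlinarith
  have key := hr.hasStarFactorOn_insert_union hm hvA (by simp) (disjoint_sdiff.mono_left
    (subset_insert v A)) hmA ((Nat.dvd_add_right hmA).mp (hcard ▸ hdvd)) hA_card
  rwa [← insert_union, union_sdiff_of_subset (subset_univ _)] at key
end

section
/- Let k ≥ 1 and n ≥ k be natural numbers. If C(n,k)·(1 − 2^{−k})^{n−k} < 1 (where C(n,k) is the binomial coefficient), then there exists a tournament on n vertices that is k-dominated. -/
/-- k-dominated: every k-set of vertices has an outside vertex dominating all of it. -/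
def KDominated {n : ℕ} (r : Fin n → Fin n → Prop) (k : ℕ) : Prop :=
  ∀ U : Finset (Fin n), U.card = k → ∃ v, v ∉ U ∧ ∀ u ∈ U, r v u

open Classical

namespace TournAux

variable {n : ℕ}

/-- The tournament relation built from a boolean matrix. -/
def rOf (f : Fin n × Fin n → Bool) (u v : Fin n) : Prop :=
  u ≠ v ∧ (if u < v then f (u, v) = true else f (v, u) = false)

lemma rOf_tournament (f : Fin n × Fin n → Bool) : IsTournament (rOf f) := by
  constructor
  · rintro u v ⟨hne, hc⟩ ⟨hne', hc'⟩
    rcases lt_or_gt_of_ne hne with h | h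
    · rw [if_pos h] at hc
      rw [if_neg (not_lt.2 h.le)] at hc'
      simp [hc] at hc'
    · rw [if_neg (not_lt.2 h.le)] at hc
      rw [if_pos h] at hc'
      simp [hc'] at hc
  · intro u v hne
    rcases lt_or_gt_of_ne hne with h | h
    · by_cases hb : f (u, v) = true
      · exact Or.inl ⟨hne, by rw [if_pos h]; exact hb⟩
      · exact Or.inr ⟨hne.symm, by rw [if_neg (not_lt.2 h.le)]; simpa using hb⟩
    · by_cases hb : f (v, u) = true
      · exact Or.inr ⟨hne.symm, by rw [if_pos h]; exact hb⟩
      · exact Or.inl ⟨hne, by rw [if_neg (not_lt.2 h.le)]; simpa using hb⟩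

/-- The bit saying whether v dominates u. -/
def bit (f : Fin n × Fin n → Bool) (v u : Fin n) : Bool :=
  if v < u then f (v, u) else !f (u, v)

lemma rOf_iff_bit {f : Fin n × Fin n → Bool} {v u : Fin n} (h : v ≠ u) :
    rOf f v u ↔ bit f v u = true := by
  unfold rOf bit
  rcases lt_or_gt_of_ne h with h1 | h1
  · rw [if_pos h1, if_pos h1]; simp [h]
  · rw [if_neg (not_lt.2 h1.le), if_neg (not_lt.2 h1.le)]; simp [h]

/-- cross pair predicate -/
def InIm (U : Finset (Fin n)) (p : Fin n × Fin n) : Prop :=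
  p.1 < p.2 ∧ ((p.1 ∈ U ∧ p.2 ∉ U) ∨ (p.1 ∉ U ∧ p.2 ∈ U))

noncomputable def E (U : Finset (Fin n)) :
    (Fin n × Fin n → Bool) ≃
      ((↥(Uᶜ) → ↥U → Bool) × ({p : Fin n × Fin n // ¬ InIm U p} → Bool)) where
  toFun f := (fun v u => bit f v u, fun q => f q.1)
  invFun x := fun p =>
    if hp : InIm U p then
      if h1 : p.1 ∈ U then
        !(x.1 ⟨p.2, Finset.mem_compl.mpr (by
            rcases hp.2 with h | h
            · exact h.2
            · exact absurd h1 h.1)⟩ ⟨p.1, h1⟩)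
      else
        x.1 ⟨p.1, Finset.mem_compl.mpr h1⟩ ⟨p.2, by
            rcases hp.2 with h | h
            · exact absurd h.1 h1
            · exact h.2⟩
    else x.2 ⟨p, hp⟩
  left_inv f := by
    funext p
    obtain ⟨a, b⟩ := p
    dsimp only
    by_cases hp : InIm U (a, b)
    · rw [dif_pos hp]
      by_cases h1 : (a, b).1 ∈ U
      · rw [dif_pos h1]
        show (!(bit f b a)) = f (a, b)
        have hab : a < b := hp.1
        rw [bit, if_neg (not_lt.2 hab.le)]
        exact Bool.not_not _
      · rw [dif_neg h1]
        show bit f a b = f (a, b)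
        rw [bit, if_pos hp.1]
    · rw [dif_neg hp]
  right_inv x := by
    obtain ⟨g, h⟩ := x
    refine Prod.ext ?_ ?_
    · funext v u
      dsimp only
      show bit _ (v : Fin n) (u : Fin n) = g v u
      have hvU : (v : Fin n) ∉ U := Finset.mem_compl.mp v.2
      have hne : (v : Fin n) ≠ (u : Fin n) := fun h' => hvU (h' ▸ u.2)
      rcases lt_or_gt_of_ne hne with hlt | hlt
      · rw [bit, if_pos hlt]
        have hIm : InIm U ((v : Fin n), (u : Fin n)) := ⟨hlt, Or.inr ⟨hvU, u.2⟩⟩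
        rw [dif_pos hIm, dif_neg hvU]
      · rw [bit, if_neg (not_lt.2 hlt.le)]
        have hIm : InIm U ((u : Fin n), (v : Fin n)) := ⟨hlt, Or.inl ⟨u.2, hvU⟩⟩
        rw [dif_pos hIm]
        rw [dif_pos u.2]
        simp
    · funext q
      dsimp only
      show (if hp : InIm U (q : Fin n × Fin n) then _ else _) = h q
      rw [dif_neg q.2]

/-- The set of matrices for which U is undominated. -/
noncomputable def badSet (U : Finset (Fin n)) : Finset (Fin n × Fin n → Bool) :=
  Finset.filter (fun f => ∀ v ∉ U, ∃ u ∈ U, ¬ rOf f v u) Finset.univ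

lemma mem_badSet {U : Finset (Fin n)} {f : Fin n × Fin n → Bool} :
    f ∈ badSet U ↔ ∀ v ∉ U, ∃ u ∈ U, ¬ rOf f v u := by
  simp [badSet]

lemma card_badSet_mul {k : ℕ} (U : Finset (Fin n)) (hU : U.card = k) :
    (badSet U).card * (2 ^ k) ^ (n - k) =
      (2 ^ k - 1) ^ (n - k) * Fintype.card (Fin n × Fin n → Bool) := by
  classical
  have hcompl : Fintype.card ↥(Uᶜ) = n - k := by
    rw [Fintype.card_coe, Finset.card_compl, hU, Fintype.card_fin]
  have hUc : Fintype.card ↥U = k := by rw [Fintype.card_coe, hU]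
  have hone : Fintype.card {h : ↥U → Bool // ∀ u, h u = true} = 1 := by
    rw [Fintype.card_congr (Equiv.subtypePiEquivPi (p := fun (_ : ↥U) (b : Bool) => b = true))]
    rw [Fintype.card_pi]
    have : ∀ u : ↥U, Fintype.card {b : Bool // b = true} = 1 := fun u => by
      simp [Fintype.card_subtype]
    simp [this]
  have hc0 : Fintype.card {h : ↥U → Bool // ∃ u, h u = false} = 2 ^ k - 1 := by
    have e : {h : ↥U → Bool // ∃ u, h u = false} ≃ {h : ↥U → Bool // ¬ ∀ u, h u = true} :=
      Equiv.subtypeEquivRight (fun h => by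
        constructor
        · rintro ⟨u, hu⟩ hall; rw [hall u] at hu; simp at hu
        · intro hna
          by_contra hne
          push_neg at hne
          exact hna fun u => by
            have := hne u
            cases hb : h u with
            | false => exact absurd hb this
            | true => rfl)
    rw [Fintype.card_congr e, Fintype.card_subtype_compl, hone, Fintype.card_fun,
      Fintype.card_bool, hUc]
  have hQ : Fintype.card {g : ↥(Uᶜ) → ↥U → Bool // ∀ v, ∃ u, g v u = false}
      = (2 ^ k - 1) ^ (n - k) := by
    rw [Fintype.card_congr (Equiv.subtypePiEquivPi
      (p := fun (_ : ↥(Uᶜ)) (h : ↥U → Bool) => ∃ u, h u = false))]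
    rw [Fintype.card_pi]
    simp only [hc0]
    rw [Finset.prod_const, Finset.card_univ, hcompl]
  set R := Fintype.card ({p : Fin n × Fin n // ¬ InIm U p} → Bool) with hR
  have hbadcard : (badSet U).card = (2 ^ k - 1) ^ (n - k) * R := by
    have h1 : (badSet U).card
        = Fintype.card {f : Fin n × Fin n → Bool // ∀ v ∉ U, ∃ u ∈ U, ¬ rOf f v u} := by
      rw [Fintype.card_subtype, badSet]
    rw [h1]
    have e1 : {f : Fin n × Fin n → Bool // ∀ v ∉ U, ∃ u ∈ U, ¬ rOf f v u} ≃
        {x : (↥(Uᶜ) → ↥U → Bool) × ({p : Fin n × Fin n // ¬ InIm U p} → Bool) //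
          ∀ v : ↥(Uᶜ), ∃ u : ↥U, x.1 v u = false} := by
      refine (E U).subtypeEquiv (fun f => ?_)
      show (∀ v ∉ U, ∃ u ∈ U, ¬ rOf f v u) ↔ (∀ v : ↥(Uᶜ), ∃ u : ↥U, bit f v u = false)
      constructor
      · intro hP v
        obtain ⟨u, hu, hr⟩ := hP v (Finset.mem_compl.mp v.2)
        refine ⟨⟨u, hu⟩, ?_⟩
        have hne : (v : Fin n) ≠ u := fun h' => (Finset.mem_compl.mp v.2) (h' ▸ hu)
        cases hb : bit f v u with
        | false => rfl
        | true => exact absurd ((rOf_iff_bit hne).mpr hb) hr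
      · intro hQ' v hv
        obtain ⟨u, hu⟩ := hQ' ⟨v, Finset.mem_compl.mpr hv⟩
        refine ⟨u, u.2, fun hr => ?_⟩
        have hne : v ≠ (u : Fin n) := fun h' => hv (h' ▸ u.2)
        rw [(rOf_iff_bit hne).mp hr] at hu
        simp at hu
    have e2 : {x : (↥(Uᶜ) → ↥U → Bool) × ({p : Fin n × Fin n // ¬ InIm U p} → Bool) //
          ∀ v : ↥(Uᶜ), ∃ u : ↥U, x.1 v u = false} ≃
        {g : ↥(Uᶜ) → ↥U → Bool // ∀ v, ∃ u, g v u = false} ×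
          ({p : Fin n × Fin n // ¬ InIm U p} → Bool) :=
      { toFun := fun x => (⟨x.1.1, x.2⟩, x.1.2)
        invFun := fun y => ⟨(y.1.1, y.2), y.1.2⟩
        left_inv := fun _ => rfl
        right_inv := fun _ => rfl }
    rw [Fintype.card_congr (e1.trans e2), Fintype.card_prod, hQ]
  have hOmega : Fintype.card (Fin n × Fin n → Bool) = (2 ^ k) ^ (n - k) * R := by
    rw [Fintype.card_congr (E U), Fintype.card_prod]
    congr 1
    rw [Fintype.card_fun, Fintype.card_fun, Fintype.card_bool, hUc, hcompl]
  rw [hbadcard, hOmega]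
  ring

end TournAux

theorem exists_k_dominated_of_expectation_lt_one (k n : ℕ) (hk : 1 ≤ k) (hkn : k ≤ n)
    (hexp : (n.choose k : ℝ) * (1 - ((2 : ℝ) ^ k)⁻¹) ^ (n - k) < 1) :
    ∃ r : Fin n → Fin n → Prop, IsTournament r ∧ KDominated r k := by
  classical
  open TournAux in
  -- the key natural-number inequality
  have h2k : (0 : ℝ) < (2 : ℝ) ^ k := by positivity
  have h1le : 1 ≤ 2 ^ k := Nat.one_le_two_pow
  have hnat : n.choose k * (2 ^ k - 1) ^ (n - k) < (2 ^ k) ^ (n - k) := by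
    have hcast : ((2 ^ k - 1 : ℕ) : ℝ) = (2 : ℝ) ^ k - 1 := by
      push_cast [Nat.cast_sub h1le]
      ring
    have hreal : (n.choose k : ℝ) * ((2 : ℝ) ^ k - 1) ^ (n - k) < ((2 : ℝ) ^ k) ^ (n - k) := by
      have hrw : (1 - ((2 : ℝ) ^ k)⁻¹) = ((2 : ℝ) ^ k - 1) / (2 : ℝ) ^ k := by
        field_simp
      rw [hrw, div_pow, ← mul_div_assoc, div_lt_one (by positivity)] at hexp
      exact hexp
    have := hreal
    rw [← hcast] at this
    exact_mod_cast this
  -- union bound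
  set Ω := (Fin n × Fin n → Bool)
  set allBad : Finset Ω := Finset.filter
    (fun f => ∃ U : Finset (Fin n), U.card = k ∧ ∀ v ∉ U, ∃ u ∈ U, ¬ rOf f v u)
    Finset.univ with hallBad
  have hsub : allBad ⊆ (Finset.powersetCard k (Finset.univ : Finset (Fin n))).biUnion
      (fun U => badSet U) := by
    intro f hf
    rw [hallBad, Finset.mem_filter] at hf
    obtain ⟨-, U, hUcard, hbad⟩ := hf
    refine Finset.mem_biUnion.mpr ⟨U, ?_, mem_badSet.mpr hbad⟩
    rw [Finset.mem_powersetCard]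
    exact ⟨Finset.subset_univ _, hUcard⟩
  have hM : 0 < (2 ^ k) ^ (n - k) := by positivity
  have hΩpos : 0 < Fintype.card Ω := Fintype.card_pos
  have hcardlt : allBad.card < Fintype.card Ω := by
    have h1 : allBad.card * (2 ^ k) ^ (n - k)
        ≤ (∑ U ∈ Finset.powersetCard k (Finset.univ : Finset (Fin n)), (badSet U).card)
          * (2 ^ k) ^ (n - k) :=
      Nat.mul_le_mul_right _ (le_trans (Finset.card_le_card hsub) Finset.card_biUnion_le)
    have h2 : (∑ U ∈ Finset.powersetCard k (Finset.univ : Finset (Fin n)), (badSet U).card)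
          * (2 ^ k) ^ (n - k)
        = n.choose k * ((2 ^ k - 1) ^ (n - k) * Fintype.card Ω) := by
      rw [Finset.sum_mul]
      have : ∀ U ∈ Finset.powersetCard k (Finset.univ : Finset (Fin n)),
          (badSet U).card * (2 ^ k) ^ (n - k)
            = (2 ^ k - 1) ^ (n - k) * Fintype.card Ω := by
        intro U hU
        rw [Finset.mem_powersetCard] at hU
        exact card_badSet_mul U hU.2
      rw [Finset.sum_congr rfl this, Finset.sum_const, Finset.card_powersetCard,
        Finset.card_univ, Fintype.card_fin, smul_eq_mul]
    have h3 : n.choose k * ((2 ^ k - 1) ^ (n - k) * Fintype.card Ω)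
        < (2 ^ k) ^ (n - k) * Fintype.card Ω := by
      rw [← mul_assoc]
      exact (Nat.mul_lt_mul_right hΩpos).mpr hnat
    have h4 : allBad.card * (2 ^ k) ^ (n - k) < Fintype.card Ω * (2 ^ k) ^ (n - k) := by
      calc allBad.card * (2 ^ k) ^ (n - k) ≤ _ := h1
        _ = _ := h2
        _ < (2 ^ k) ^ (n - k) * Fintype.card Ω := h3
        _ = Fintype.card Ω * (2 ^ k) ^ (n - k) := mul_comm _ _
    exact Nat.lt_of_mul_lt_mul_right h4
  -- pick a good f
  have hne : (Finset.univ \ allBad).Nonempty := by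
    rw [← Finset.card_pos, Finset.card_sdiff_of_subset (Finset.subset_univ _), Finset.card_univ]
    omega
  obtain ⟨f, hf⟩ := hne
  rw [Finset.mem_sdiff] at hf
  have hgood : ¬ ∃ U : Finset (Fin n), U.card = k ∧ ∀ v ∉ U, ∃ u ∈ U, ¬ rOf f v u := by
    intro hbad
    exact hf.2 (by rw [hallBad, Finset.mem_filter]; exact ⟨Finset.mem_univ _, hbad⟩)
  push_neg at hgood
  refine ⟨rOf f, rOf_tournament f, fun U hU => ?_⟩
  have := hgood U hU
  obtain ⟨v, hv, hdom⟩ := this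
  exact ⟨v, hv, hdom⟩
end

section
/- There exists a natural number k₀ such that for all k ≥ k₀, there exists a tournament on k²·2^k vertices that is k-dominated. -/
/-!
Colour the edges of the complete graph on `n = k² 2ᵏ` vertices uniformly at random and orient
each edge according to its colour. A fixed `k`-set `U` is dominated by a given outside vertex with
probability `2⁻ᵏ`, independently for the `n - k` outside vertices since they involve disjoint sets
of edges, so `U` is undominated with probability `(1 - 2⁻ᵏ)ⁿ⁻ᵏ`. As `(1 - 1/m)ᵐ ≤ e⁻¹ < 2/5`,
this is at most about `(2/5)^(k²)`, which beats the `(n choose k) ≤ k^(2k) 2^(k²)` choices of `U`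
for large `k`; so some colouring leaves no `k`-set undominated. Probabilities are replaced by
counts of colourings throughout.
-/

open Finset Fintype

section Counting

variable {α β γ ι κ : Type*} [Fintype β]

theorem card_subtype_comp_embedding_mul [Fintype ι] [Fintype κ] [DecidableEq ι] [DecidableEq κ]
    (p : ι ↪ κ) (P : (ι → β) → Prop) [DecidablePred P] :
    card {g : κ → β // P (g ∘ p)} * card β ^ card ι =
      card {h : ι → β // P h} * card β ^ card κ := by
  classical
  let e : (κ → β) ≃ (ι → β) × ({x // x ∉ Set.range p} → β) :=
    (Equiv.piEquivPiSubtypeProd (· ∈ Set.range p) fun _ => β).trans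
      (Equiv.prodCongr (Equiv.arrowCongr (Equiv.ofInjective p p.injective).symm (Equiv.refl β))
        (Equiv.refl _))
  have hcard : card {g : κ → β // P (g ∘ p)} =
      card {h : ι → β // P h} * card β ^ (card κ - card ι) := by
    rw [card_congr ((e.subtypeEquiv (p := fun g => P (g ∘ p)) (q := fun x => P x.1)
        fun g => Iff.rfl).trans Equiv.prodSubtypeFstEquivSubtypeProd),
      card_prod, card_fun, card_subtype_compl, Fintype.card_range]
  rw [hcard, mul_assoc, ← pow_add, Nat.sub_add_cancel (card_le_of_embedding p)]

theorem card_subtype_forall_exists_ne [Fintype α] [Fintype γ] [DecidableEq α] [DecidableEq γ]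
    [DecidableEq β] (t : α × γ → β) :
    card {h : α × γ → β // ∀ a, ∃ c, h (a, c) ≠ t (a, c)} = (card β ^ card γ - 1) ^ card α := by
  have hne : ∀ a, card {f : γ → β // f ≠ fun c => t (a, c)} = card β ^ card γ - 1 := fun a => by
    rw [card_subtype_compl, card_subtype_eq, card_fun]
  have e : {h : α × γ → β // ∀ a, ∃ c, h (a, c) ≠ t (a, c)} ≃
      ∀ a, {f : γ → β // f ≠ fun c => t (a, c)} :=
    ((Equiv.curry α γ β).subtypeEquiv fun h => by simp [funext_iff]).trans
      Equiv.subtypePiEquivPi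
  rw [card_congr e, Fintype.card_pi, prod_congr rfl fun a _ => hne a, prod_const, card_univ]

end Counting

theorem exists_forall_not_of_sum_card_lt {Ω ι : Type*} [Fintype Ω] (s : Finset ι)
    (P : ι → Ω → Prop) [∀ i, DecidablePred (P i)]
    (h : ∑ i ∈ s, card {ω // P i ω} < card Ω) : ∃ ω, ∀ i ∈ s, ¬ P i ω := by
  classical
  by_contra! hcover
  have hsub : (univ : Finset Ω) ⊆ s.biUnion fun i => {ω | P i ω} := fun ω _ => by
    simpa using hcover ω
  rw [← card_univ] at h
  simp only [Fintype.card_subtype] at h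
  exact (card_le_card hsub).trans card_biUnion_le |>.not_gt h

/-- `c s(u, v) = true` means that the smaller of `u`, `v` beats the larger. -/
def tournamentOfColoring {n : ℕ} (c : Sym2 (Fin n) → Bool) (u v : Fin n) : Prop :=
  u ≠ v ∧ c s(u, v) = decide (u < v)

instance {n : ℕ} (c : Sym2 (Fin n) → Bool) : DecidableRel (tournamentOfColoring c) :=
  fun _ _ => inferInstanceAs (Decidable (_ ∧ _))

theorem isTournament_tournamentOfColoring {n : ℕ} (c : Sym2 (Fin n) → Bool) :
    IsTournament (tournamentOfColoring c) := by
  unfold IsTournament tournamentOfColoring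
  refine ⟨fun u v ⟨huv, hc⟩ ⟨_, hc'⟩ => ?_, fun u v huv => ?_⟩
  · rw [Sym2.eq_swap, hc'] at hc
    rcases huv.lt_or_gt with h | h <;> simp [h, h.not_gt] at hc
  · rw [Sym2.eq_swap (a := v)]
    rcases huv.lt_or_gt with h | h <;> cases c s(u, v) <;> simp [huv, huv.symm, h, h.not_gt]

theorem card_undominated_mul {n : ℕ} (U : Finset (Fin n)) :
    card {c : Sym2 (Fin n) → Bool // ∀ v ∉ U, ∃ u ∈ U, ¬ tournamentOfColoring c v u} *
        2 ^ (#U * (n - #U)) =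
      (2 ^ #U - 1) ^ (n - #U) * 2 ^ card (Sym2 (Fin n)) := by
  let p : ↥Uᶜ × ↥U ↪ Sym2 (Fin n) :=
    ⟨fun x => s(x.1, x.2), fun ⟨v, u⟩ ⟨v', u'⟩ h => by
      have hv := mem_compl.1 v.2
      have hv' := mem_compl.1 v'.2
      rcases Sym2.eq_iff.1 h with ⟨h₁, h₂⟩ | ⟨h₁, -⟩
      · exact Prod.ext (Subtype.ext h₁) (Subtype.ext h₂)
      · exact absurd (h₁ ▸ u'.2) hv⟩
  have hbad : ∀ c : Sym2 (Fin n) → Bool, (∀ v ∉ U, ∃ u ∈ U, ¬ tournamentOfColoring c v u) ↔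
      ∀ v : ↥Uᶜ, ∃ u : ↥U, (c ∘ p) (v, u) ≠ decide (v.1 < u.1) := fun c => by
    simp only [Subtype.forall, Subtype.exists, mem_compl]
    exact forall₂_congr fun v hv =>
      ⟨fun ⟨u, hu, h⟩ => ⟨u, hu, fun h' => h ⟨(ne_of_mem_of_not_mem hu hv).symm, h'⟩⟩,
        fun ⟨u, hu, h⟩ => ⟨u, hu, fun ⟨_, h'⟩ => h h'⟩⟩
  have hcount := card_subtype_comp_embedding_mul p
    fun h => ∀ v : ↥Uᶜ, ∃ u : ↥U, h (v, u) ≠ decide (v.1 < u.1)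
  rw [card_subtype_forall_exists_ne fun x : ↥Uᶜ × ↥U => decide (x.1.1 < x.2.1)] at hcount
  simp only [Fintype.card_bool, card_prod, card_coe, card_compl, Fintype.card_fin] at hcount
  rw [card_congr (Equiv.subtypeEquivRight hbad), ← hcount, mul_comm #U]

theorem five_mul_sub_one_pow_le {m : ℕ} (hm : 0 < m) : 5 * (m - 1) ^ m ≤ 2 * m ^ m := by
  have hm' : (0 : ℝ) < m := by exact_mod_cast hm
  have hexp : Real.exp (-1) < 2 / 5 := by
    rw [Real.exp_neg, inv_lt_comm₀ (Real.exp_pos 1) (by norm_num)]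
    linarith [Real.exp_one_gt_d9]
  have hpow : (1 - 1 / (m : ℝ)) ^ m < 2 / 5 :=
    (Real.one_sub_div_pow_le_exp_neg (by exact_mod_cast hm)).trans_lt hexp
  have hsplit : ((m - 1 : ℕ) : ℝ) ^ m = (m : ℝ) ^ m * (1 - 1 / (m : ℝ)) ^ m := by
    rw [← mul_pow, mul_sub, mul_one_div_cancel hm'.ne', mul_one, Nat.cast_sub hm, Nat.cast_one]
  have hreal : 5 * ((m - 1 : ℕ) : ℝ) ^ m ≤ 2 * (m : ℝ) ^ m := by
    rw [hsplit]
    nlinarith [pow_pos hm' m]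
  exact_mod_cast hreal

theorem five_mul_sq_mul_four_pow_lt_five_pow {k : ℕ} (hk : 50 ≤ k) :
    5 * k ^ 2 * 4 ^ k < 5 ^ k := by
  induction k, hk using Nat.le_induction with
  | base => norm_num
  | succ k hk ih =>
    calc 5 * (k + 1) ^ 2 * 4 ^ (k + 1) = 4 * (k + 1) ^ 2 * (5 * 4 ^ k) := by ring
      _ ≤ 5 * k ^ 2 * (5 * 4 ^ k) := Nat.mul_le_mul_right _ (by nlinarith)
      _ = 5 * (5 * k ^ 2 * 4 ^ k) := by ring
      _ < 5 ^ (k + 1) := by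
          rw [pow_succ' 5 k]; exact (Nat.mul_lt_mul_left (a := 5) (by norm_num)).2 ih

theorem pow_mul_two_pow_lt_five_pow {k a : ℕ} (hk : 50 ≤ k) (ha : k ^ 2 = a + 1) :
    (k ^ 2 * 2 ^ k) ^ k * 2 ^ a < 5 ^ a := by
  have hkk : k * k = a + 1 := by rw [← sq, ha]
  have hdouble : 2 * ((k ^ 2 * 2 ^ k) ^ k * 2 ^ a) = (k ^ 2 * 4 ^ k) ^ k := by
    calc 2 * ((k ^ 2 * 2 ^ k) ^ k * 2 ^ a) = (k ^ 2) ^ k * (2 ^ (k * k) * 2 ^ (a + 1)) := by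
          rw [mul_pow, ← pow_mul]; ring
      _ = (k ^ 2) ^ k * 4 ^ (k * k) := by rw [hkk, ← mul_pow]; norm_num
      _ = (k ^ 2 * 4 ^ k) ^ k := by rw [mul_pow, pow_mul 4]
  have hfive : 5 * (2 * ((k ^ 2 * 2 ^ k) ^ k * 2 ^ a)) < 5 * 5 ^ a := by
    calc 5 * (2 * ((k ^ 2 * 2 ^ k) ^ k * 2 ^ a)) = 5 * (k ^ 2 * 4 ^ k) ^ k := by rw [hdouble]
      _ ≤ 5 ^ k * (k ^ 2 * 4 ^ k) ^ k :=
          Nat.mul_le_mul_right _ (Nat.le_self_pow (by omega) 5)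
      _ = (5 * k ^ 2 * 4 ^ k) ^ k := by rw [mul_assoc, mul_pow 5]
      _ < (5 ^ k) ^ k := Nat.pow_lt_pow_left (five_mul_sq_mul_four_pow_lt_five_pow hk) (by omega)
      _ = 5 * 5 ^ a := by rw [← pow_mul, hkk, pow_succ']
  have := Nat.lt_of_mul_lt_mul_left hfive
  omega

theorem choose_mul_pow_lt {k : ℕ} (hk : 50 ≤ k) :
    (k ^ 2 * 2 ^ k).choose k * (2 ^ k - 1) ^ (k ^ 2 * 2 ^ k - k) <
      2 ^ (k * (k ^ 2 * 2 ^ k - k)) := by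
  obtain ⟨a, ha⟩ : ∃ a, k ^ 2 = a + 1 :=
    Nat.exists_eq_add_one.2 (pow_pos (by omega) 2)
  set m := 2 ^ k with hm
  set n := k ^ 2 * m with hn
  have hkm : k ≤ m := Nat.lt_two_pow_self.le
  -- `k² - 1` full blocks of `m` factors `(m - 1) / m`, each block at most `2/5`
  have hnk : n - k = m * a + (m - k) := by
    have : n = m * a + m := by rw [hn, ha]; ring
    omega
  have hbase : n ^ k * ((m - 1) ^ m) ^ a < (m ^ m) ^ a := by
    refine Nat.lt_of_mul_lt_mul_left (a := 5 ^ a) ?_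
    calc 5 ^ a * (n ^ k * ((m - 1) ^ m) ^ a) = n ^ k * (5 * (m - 1) ^ m) ^ a := by ring
      _ ≤ n ^ k * (2 * m ^ m) ^ a :=
          Nat.mul_le_mul_left _ (Nat.pow_le_pow_left (five_mul_sub_one_pow_le (by positivity)) a)
      _ = (n ^ k * 2 ^ a) * (m ^ m) ^ a := by ring
      _ < 5 ^ a * (m ^ m) ^ a :=
          Nat.mul_lt_mul_of_pos_right (pow_mul_two_pow_lt_five_pow hk ha) (by positivity)
  calc n.choose k * (m - 1) ^ (n - k) ≤ n ^ k * (m - 1) ^ (n - k) :=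
        Nat.mul_le_mul_right _ (Nat.choose_le_pow n k)
    _ = n ^ k * ((m - 1) ^ m) ^ a * (m - 1) ^ (m - k) := by rw [hnk, pow_add, pow_mul]; ring
    _ ≤ n ^ k * ((m - 1) ^ m) ^ a * m ^ (m - k) :=
        Nat.mul_le_mul_left _ (Nat.pow_le_pow_left (Nat.sub_le m 1) _)
    _ < (m ^ m) ^ a * m ^ (m - k) := Nat.mul_lt_mul_of_pos_right hbase (by positivity)
    _ = 2 ^ (k * (n - k)) := by rw [← pow_mul, ← pow_add, ← hnk, hm, ← pow_mul]

theorem exists_k_dominated_tournament :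
    ∃ k₀ : ℕ, ∀ k : ℕ, k₀ ≤ k →
      ∃ r : Fin (k ^ 2 * 2 ^ k) → Fin (k ^ 2 * 2 ^ k) → Prop,
        IsTournament r ∧ KDominated r k := by
  refine ⟨50, fun k hk => ?_⟩
  set n := k ^ 2 * 2 ^ k
  have hcount : ∀ U ∈ powersetCard k (univ : Finset (Fin n)),
      card {c : Sym2 (Fin n) → Bool // ∀ v ∉ U, ∃ u ∈ U, ¬ tournamentOfColoring c v u} *
        2 ^ (k * (n - k)) = (2 ^ k - 1) ^ (n - k) * 2 ^ card (Sym2 (Fin n)) := fun U hU => by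
    simpa [mem_powersetCard_univ.1 hU] using card_undominated_mul U
  have hsum : ∑ U ∈ powersetCard k (univ : Finset (Fin n)),
      card {c : Sym2 (Fin n) → Bool // ∀ v ∉ U, ∃ u ∈ U, ¬ tournamentOfColoring c v u} <
        card (Sym2 (Fin n) → Bool) := by
    refine Nat.lt_of_mul_lt_mul_right (a := 2 ^ (k * (n - k))) ?_
    rw [sum_mul, sum_congr rfl hcount, sum_const, card_powersetCard, card_univ, Fintype.card_fin,
      smul_eq_mul, card_fun, card_bool, ← mul_assoc, mul_comm (2 ^ _)]
    exact Nat.mul_lt_mul_of_pos_right (choose_mul_pow_lt hk) (by positivity)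
  obtain ⟨c, hc⟩ := exists_forall_not_of_sum_card_lt _ _ hsum
  refine ⟨tournamentOfColoring c, isTournament_tournamentOfColoring c, fun U hU => ?_⟩
  simpa using hc U (mem_powersetCard_univ.2 hU)
end

section
/- f(3) = 6: every tournament on 6 vertices admits a 3-star-factor, and there exists a tournament on 3 vertices (the cyclic triple) with no vertex dominating the other two, so 6 is the least positive integer n such that every tournament on n vertices admits a 3-star-factor. -/
def good' (b0 b1 b2 b3 b4 b5 b6 b7 b8 b9 b10 b11 b12 b13 b14 : Bool) : Bool :=
  (((b0 && b1) || (!b0 && b5) || (!b1 && !b5)) && ((b12 && b13) || (!b12 && b14) || (!b13 && !b14))) ||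
  (((b0 && b2) || (!b0 && b6) || (!b2 && !b6)) && ((b10 && b11) || (!b10 && b14) || (!b11 && !b14))) ||
  (((b0 && b3) || (!b0 && b7) || (!b3 && !b7)) && ((b9 && b11) || (!b9 && b13) || (!b11 && !b13))) ||
  (((b0 && b4) || (!b0 && b8) || (!b4 && !b8)) && ((b9 && b10) || (!b9 && b12) || (!b10 && !b12))) ||
  (((b1 && b2) || (!b1 && b9) || (!b2 && !b9)) && ((b7 && b8) || (!b7 && b14) || (!b8 && !b14))) ||
  (((b1 && b3) || (!b1 && b10) || (!b3 && !b10)) && ((b6 && b8) || (!b6 && b13) || (!b8 && !b13))) ||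
  (((b1 && b4) || (!b1 && b11) || (!b4 && !b11)) && ((b6 && b7) || (!b6 && b12) || (!b7 && !b12))) ||
  (((b2 && b3) || (!b2 && b12) || (!b3 && !b12)) && ((b5 && b8) || (!b5 && b11) || (!b8 && !b11))) ||
  (((b2 && b4) || (!b2 && b13) || (!b4 && !b13)) && ((b5 && b7) || (!b5 && b10) || (!b7 && !b10))) ||
  (((b3 && b4) || (!b3 && b14) || (!b4 && !b14)) && ((b5 && b6) || (!b5 && b9) || (!b6 && !b9)))

def allB (f : Bool → Bool) : Bool := f false && f true

set_option maxHeartbeats 4000000 in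
theorem key : allB (fun b0 => allB (fun b1 => allB (fun b2 => allB (fun b3 => allB (fun b4 => allB (fun b5 => allB (fun b6 => allB (fun b7 => allB (fun b8 => allB (fun b9 => allB (fun b10 => allB (fun b11 => allB (fun b12 => allB (fun b13 => allB (fun b14 => good' b0 b1 b2 b3 b4 b5 b6 b7 b8 b9 b10 b11 b12 b13 b14))))))))))))))) = true := by decide

lemma allB_spec {f : Bool → Bool} (h : allB f = true) (b : Bool) : f b = true := by
  simp only [allB, Bool.and_eq_true] at h
  cases b
  · exact h.1
  · exact h.2

lemma upper (r : Fin 6 → Fin 6 → Prop) (ht : IsTournament r) : HasStarFactor r 3 := by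
  classical
  have star : ∀ a b c : Fin 6, a ≠ b → a ≠ c → b ≠ c →
      ((r a b ∧ r a c) ∨ (r b a ∧ r b c) ∨ (r c a ∧ r c b)) →
      IsMStar r 3 ({a, b, c} : Finset (Fin 6)) := by
    intro a b c hab hac hbc h
    refine ⟨?_, ?_⟩
    · rw [Finset.card_insert_of_notMem (by simp [hab, hac]),
        Finset.card_insert_of_notMem (by simp [hbc]), Finset.card_singleton]
    · rcases h with ⟨h1, h2⟩ | ⟨h1, h2⟩ | ⟨h1, h2⟩
      · refine ⟨a, by simp, ?_⟩
        intro v hv hva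
        simp only [Finset.mem_insert, Finset.mem_singleton] at hv
        rcases hv with rfl | rfl | rfl
        · exact absurd rfl hva
        · exact h1
        · exact h2
      · refine ⟨b, by simp, ?_⟩
        intro v hv hvb
        simp only [Finset.mem_insert, Finset.mem_singleton] at hv
        rcases hv with rfl | rfl | rfl
        · exact h1
        · exact absurd rfl hvb
        · exact h2
      · refine ⟨c, by simp, ?_⟩
        intro v hv hvc
        simp only [Finset.mem_insert, Finset.mem_singleton] at hv
        rcases hv with rfl | rfl | rfl
        · exact h1
        · exact h2
        · exact absurd rfl hvc
  have factor : ∀ S T : Finset (Fin 6), IsMStar r 3 S → IsMStar r 3 T →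
      Disjoint S T → S ∪ T = Finset.univ → HasStarFactor r 3 := by
    intro S T hS hT hd hu
    refine ⟨{S, T}, ?_, ?_, ?_⟩
    · intro X hX
      rcases Finset.mem_insert.mp hX with rfl | hX
      · exact hS
      · rw [Finset.mem_singleton.mp hX]; exact hT
    · intro X hX Y hY hXY
      simp only [Finset.coe_insert, Finset.coe_singleton, Set.mem_insert_iff,
        Set.mem_singleton_iff] at hX hY
      rcases hX with rfl | rfl <;> rcases hY with rfl | rfl
      · exact absurd rfl hXY
      · exact hd
      · exact hd.symm
      · exact absurd rfl hXY
    · rw [Finset.biUnion_insert, Finset.singleton_biUnion]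
      exact hu
  have hrev : ∀ u v : Fin 6, u ≠ v → ((¬ r u v) ↔ r v u) := by
    intro u v huv
    constructor
    · intro h
      rcases ht.2 u v huv with h' | h'
      · exact absurd h' h
      · exact h'
    · intro h h'
      exact ht.1 u v h' h
  have hg : good' (decide (r 0 1)) (decide (r 0 2)) (decide (r 0 3)) (decide (r 0 4)) (decide (r 0 5)) (decide (r 1 2)) (decide (r 1 3)) (decide (r 1 4)) (decide (r 1 5)) (decide (r 2 3)) (decide (r 2 4)) (decide (r 2 5)) (decide (r 3 4)) (decide (r 3 5)) (decide (r 4 5)) = true := by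
    exact (allB_spec (allB_spec (allB_spec (allB_spec (allB_spec (allB_spec (allB_spec (allB_spec (allB_spec (allB_spec (allB_spec (allB_spec (allB_spec (allB_spec (allB_spec key (decide (r 0 1))) (decide (r 0 2))) (decide (r 0 3))) (decide (r 0 4))) (decide (r 0 5))) (decide (r 1 2))) (decide (r 1 3))) (decide (r 1 4))) (decide (r 1 5))) (decide (r 2 3))) (decide (r 2 4))) (decide (r 2 5))) (decide (r 3 4))) (decide (r 3 5))) (decide (r 4 5)))
  simp only [good', Bool.or_eq_true, Bool.and_eq_true, Bool.not_eq_true',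
    decide_eq_true_eq, decide_eq_false_iff_not, or_assoc,
    (hrev 0 1 (by decide)), (hrev 0 2 (by decide)), (hrev 0 3 (by decide)), (hrev 0 4 (by decide)), (hrev 0 5 (by decide)), (hrev 1 2 (by decide)), (hrev 1 3 (by decide)), (hrev 1 4 (by decide)), (hrev 1 5 (by decide)), (hrev 2 3 (by decide)), (hrev 2 4 (by decide)), (hrev 2 5 (by decide)), (hrev 3 4 (by decide)), (hrev 3 5 (by decide)), (hrev 4 5 (by decide))] at hg
  rcases hg with ⟨hA, hB⟩ | ⟨hA, hB⟩ | ⟨hA, hB⟩ | ⟨hA, hB⟩ | ⟨hA, hB⟩ | ⟨hA, hB⟩ | ⟨hA, hB⟩ | ⟨hA, hB⟩ | ⟨hA, hB⟩ | ⟨hA, hB⟩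
  · exact factor {0,1,2} {3,4,5} (star 0 1 2 (by decide) (by decide) (by decide) hA) (star 3 4 5 (by decide) (by decide) (by decide) hB) (by decide) (by decide)
  · exact factor {0,1,3} {2,4,5} (star 0 1 3 (by decide) (by decide) (by decide) hA) (star 2 4 5 (by decide) (by decide) (by decide) hB) (by decide) (by decide)
  · exact factor {0,1,4} {2,3,5} (star 0 1 4 (by decide) (by decide) (by decide) hA) (star 2 3 5 (by decide) (by decide) (by decide) hB) (by decide) (by decide)
  · exact factor {0,1,5} {2,3,4} (star 0 1 5 (by decide) (by decide) (by decide) hA) (star 2 3 4 (by decide) (by decide) (by decide) hB) (by decide) (by decide)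
  · exact factor {0,2,3} {1,4,5} (star 0 2 3 (by decide) (by decide) (by decide) hA) (star 1 4 5 (by decide) (by decide) (by decide) hB) (by decide) (by decide)
  · exact factor {0,2,4} {1,3,5} (star 0 2 4 (by decide) (by decide) (by decide) hA) (star 1 3 5 (by decide) (by decide) (by decide) hB) (by decide) (by decide)
  · exact factor {0,2,5} {1,3,4} (star 0 2 5 (by decide) (by decide) (by decide) hA) (star 1 3 4 (by decide) (by decide) (by decide) hB) (by decide) (by decide)
  · exact factor {0,3,4} {1,2,5} (star 0 3 4 (by decide) (by decide) (by decide) hA) (star 1 2 5 (by decide) (by decide) (by decide) hB) (by decide) (by decide)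
  · exact factor {0,3,5} {1,2,4} (star 0 3 5 (by decide) (by decide) (by decide) hA) (star 1 2 4 (by decide) (by decide) (by decide) hB) (by decide) (by decide)
  · exact factor {0,4,5} {1,2,3} (star 0 4 5 (by decide) (by decide) (by decide) hA) (star 1 2 3 (by decide) (by decide) (by decide) hB) (by decide) (by decide)

lemma div3 {n : ℕ} (r : Fin n → Fin n → Prop) (h : HasStarFactor r 3) : 3 ∣ n := by
  obtain ⟨P, hstar, hdisj, huniv⟩ := h
  have hcard : (Finset.univ : Finset (Fin n)).card = ∑ S ∈ P, (id S).card := by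
    rw [← huniv]
    exact Finset.card_biUnion fun S hS T hT hST => hdisj hS hT hST
  rw [Finset.card_univ, Fintype.card_fin] at hcard
  have : ∑ S ∈ P, (id S).card = 3 * P.card := by
    rw [Finset.sum_congr rfl fun S hS => (show (id S).card = 3 from (hstar S hS).1),
      Finset.sum_const, smul_eq_mul, mul_comm]
  exact ⟨P.card, by omega⟩

def cyc : Fin 3 → Fin 3 → Prop := fun u v => v = u + 1

instance : DecidableRel cyc := fun u v => inferInstanceAs (Decidable (v = u + 1))

lemma cyc_tournament : IsTournament cyc := by
  constructor <;> decide

lemma cyc_no_factor : ¬ HasStarFactor cyc 3 := by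
  rintro ⟨P, hstar, -, huniv⟩
  have h0 : (0 : Fin 3) ∈ P.biUnion id := by rw [huniv]; exact Finset.mem_univ _
  obtain ⟨S, hS, -⟩ := Finset.mem_biUnion.mp h0
  obtain ⟨hcard, c, hc, hdom⟩ := hstar S hS
  have hSu : S = Finset.univ := Finset.eq_univ_of_card S (by rw [hcard]; rfl)
  have hkey : ∀ x : Fin 3, x + 2 ≠ x ∧ ¬ cyc x (x + 2) := by decide
  exact (hkey c).2 (hdom (c + 2) (hSu ▸ Finset.mem_univ _) (hkey c).1)

theorem f_three_eq_six :
    IsLeast {n : ℕ | 0 < n ∧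
      ∀ r : Fin n → Fin n → Prop, IsTournament r → HasStarFactor r 3} 6 := by
  constructor
  · exact ⟨by norm_num, fun r ht => upper r ht⟩
  · intro n hn
    obtain ⟨hpos, hall⟩ := hn
    by_contra hlt
    push_neg at hlt
    have hlt' : Fin n → Fin n → Prop := fun u v => u < v
    have htourn : IsTournament (fun u v : Fin n => u < v) :=
      ⟨fun u v h h' => absurd h' (lt_asymm h), fun u v h => h.lt_or_gt⟩
    have h3 : 3 ∣ n := div3 _ (hall _ htourn)
    have hn3 : n = 3 := by omega
    subst hn3
    exact cyc_no_factor (hall cyc cyc_tournament)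
end

section
/- There exists a tournament on 8 vertices whose vertex set cannot be partitioned into two disjoint 4-stars. -/
open Finset

section Sink

variable {n : ℕ} {r : Fin n → Fin n → Prop} {s : Fin n}

theorem IsMStar.erase_sink {m : ℕ} {S : Finset (Fin n)} (hasymm : ∀ u v, r u v → ¬ r v u)
    (hsink : ∀ u, u ≠ s → r u s) (hS : IsMStar r m S) (hsS : s ∈ S) (hm : 2 ≤ m) :
    IsMStar r (m - 1) (S.erase s) := by
  obtain ⟨hcard, c, hcS, hdom⟩ := hS
  have hcs : c ≠ s := by
    rintro rfl
    obtain ⟨v, hvS, hvc⟩ := exists_mem_ne (by omega : 1 < S.card) c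
    exact hasymm _ _ (hdom v hvS hvc) (hsink v hvc)
  exact ⟨by rw [card_erase_of_mem hsS, hcard], c, mem_erase.2 ⟨hcs, hcS⟩,
    fun v hv hvc => hdom v (mem_of_mem_erase hv) hvc⟩

variable [DecidableRel r]

theorem false_of_isMStar_four_of_sink_mem (hr : IsTournament r) (hsink : ∀ u, u ≠ s → r u s)
    (hreg : ∀ d, d ≠ s → #{v | v ≠ s ∧ r d v} = 3)
    (hcyc : ∀ c d, d ≠ s → r c d → #{v | r v d ∧ r c v} ≤ 1)
    {S₁ S₂ : Finset (Fin n)} (hS₁ : IsMStar r 4 S₁) (hS₂ : IsMStar r 4 S₂)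
    (hdisj : Disjoint S₁ S₂) (hsS₁ : s ∈ S₁) : False := by
  obtain ⟨hcardT, c, hcT, hcdom⟩ := hS₁.erase_sink hr.1 hsink hsS₁ (by norm_num)
  obtain ⟨hcard₂, d, hdS₂, hddom⟩ := hS₂
  have hsS₂ : s ∉ S₂ := disjoint_left.1 hdisj hsS₁
  have hds : d ≠ s := ne_of_mem_of_not_mem hdS₂ hsS₂
  have hout : S₂.erase d = ({v | v ≠ s ∧ r d v} : Finset (Fin n)) := by
    refine eq_of_subset_of_card_le (fun v hv => ?_)
      (by rw [hreg d hds, card_erase_of_mem hdS₂, hcard₂])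
    obtain ⟨hvd, hvS₂⟩ := mem_erase.1 hv
    exact mem_filter.2 ⟨mem_univ v, ne_of_mem_of_not_mem hvS₂ hsS₂, hddom v hvS₂ hvd⟩
  have hin : ∀ t ∈ S₁.erase s, r t d := by
    intro t ht
    obtain ⟨hts, htS₁⟩ := mem_erase.1 ht
    have htS₂ : t ∉ S₂ := disjoint_left.1 hdisj htS₁
    refine (hr.2 t d (ne_of_mem_of_not_mem hdS₂ htS₂).symm).resolve_right fun hdt => htS₂ ?_
    have : t ∈ S₂.erase d := hout ▸ mem_filter.2 ⟨mem_univ t, hts, hdt⟩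
    exact mem_of_mem_erase this
  have hsub : (S₁.erase s).erase c ⊆ ({v | r v d ∧ r c v} : Finset (Fin n)) := fun v hv =>
    mem_filter.2 ⟨mem_univ v, hin v (mem_of_mem_erase hv),
      hcdom v (mem_of_mem_erase hv) (ne_of_mem_erase hv)⟩
  have hle := (card_le_card hsub).trans (hcyc c d hds (hin c hcT))
  rw [card_erase_of_mem hcT, hcardT] at hle
  omega

theorem not_exists_two_four_stars_of_sink (hr : IsTournament r) (hsink : ∀ u, u ≠ s → r u s)
    (hreg : ∀ d, d ≠ s → #{v | v ≠ s ∧ r d v} = 3)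
    (hcyc : ∀ c d, d ≠ s → r c d → #{v | r v d ∧ r c v} ≤ 1) :
    ¬ ∃ S₁ S₂ : Finset (Fin n), IsMStar r 4 S₁ ∧ IsMStar r 4 S₂ ∧
        Disjoint S₁ S₂ ∧ S₁ ∪ S₂ = univ := by
  rintro ⟨S₁, S₂, hS₁, hS₂, hdisj, hunion⟩
  rcases mem_union.1 (hunion ▸ mem_univ s) with hs | hs
  · exact false_of_isMStar_four_of_sink_mem hr hsink hreg hcyc hS₁ hS₂ hdisj hs
  · exact false_of_isMStar_four_of_sink_mem hr hsink hreg hcyc hS₂ hS₁ hdisj.symm hs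

end Sink

def paleyWithSink (u v : Fin 8) : Prop :=
  u ≠ 7 ∧
    (v = 7 ∨ ((v : ℕ) : ZMod 7) - ((u : ℕ) : ZMod 7) ∈ ({1, 2, 4} : Finset (ZMod 7)))

instance : DecidableRel paleyWithSink := fun u v => by unfold paleyWithSink; infer_instance

theorem isTournament_paleyWithSink : IsTournament paleyWithSink := by
  unfold IsTournament
  decide

theorem eight_vertex_no_two_four_stars :
    ∃ r : Fin 8 → Fin 8 → Prop, IsTournament r ∧
      ¬ ∃ S₁ S₂ : Finset (Fin 8), IsMStar r 4 S₁ ∧ IsMStar r 4 S₂ ∧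
          Disjoint S₁ S₂ ∧ S₁ ∪ S₂ = Finset.univ := by
  refine ⟨paleyWithSink, isTournament_paleyWithSink, ?_⟩
  exact not_exists_two_four_stars_of_sink (s := 7) isTournament_paleyWithSink
    (by decide) (by decide) (by decide)
end

section
/- There exists a tournament on 7 vertices in which every vertex has out-degree exactly 3 (a regular tournament) and whose vertex set cannot be partitioned into a 4-star and a disjoint 3-star. -/
/-- The Paley tournament on 7 vertices. -/
def paley (v u : Fin 7) : Prop := (u - v).val = 1 ∨ (u - v).val = 2 ∨ (u - v).val = 4

instance : DecidablePred fun p : Fin 7 × Fin 7 => paley p.1 p.2 := fun _ => by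
  unfold paley; infer_instance

instance (v u : Fin 7) : Decidable (paley v u) := by unfold paley; infer_instance

theorem regular_seven_vertex_no_four_star_plus_three_star :
    ∃ r : Fin 7 → Fin 7 → Prop, IsTournament r ∧
      (∀ v : Fin 7, Nat.card {u : Fin 7 // r v u} = 3) ∧
      ¬ ∃ S₁ S₂ : Finset (Fin 7), IsMStar r 4 S₁ ∧ IsMStar r 3 S₂ ∧
          Disjoint S₁ S₂ ∧ S₁ ∪ S₂ = Finset.univ := by
  refine ⟨paley, ?_, ?_, ?_⟩
  · constructor <;> decide
  · intro v
    rw [Nat.card_eq_fintype_card]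
    revert v; decide
  · set_option maxRecDepth 100000 in
    simp only [IsMStar]
    decide
end

section
/- f(4) ≥ 12: for every positive integer n ≤ 11, there exists a tournament on n vertices whose vertex set cannot be partitioned into pairwise disjoint 4-stars; in particular, there exist a tournament on 4 vertices with no vertex dominating the other three and a tournament on 8 vertices with no partition into two disjoint 4-stars. -/
/-- Tournament on 4 vertices with no dominating vertex. -/
def r4 (u v : Fin 4) : Prop :=
  (u.val, v.val) ∈ [(0,1),(1,2),(2,0),(0,3),(3,1),(3,2)]

instance : DecidableRel r4 := fun u v => by unfold r4; infer_instance

/-- Tournament on 8 vertices with no partition into two 4-stars. -/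
def r8 (u v : Fin 8) : Prop :=
  (u.val, v.val) ∈ [(0,1),(0,2),(0,3),(0,5),(1,3),(1,5),(1,6),(1,7),(2,1),(2,4),
    (2,7),(3,2),(3,5),(3,6),(4,0),(4,1),(4,3),(4,6),(5,2),(5,4),(5,6),(6,0),
    (6,2),(6,7),(7,0),(7,3),(7,4),(7,5)]

instance : DecidableRel r8 := fun u v => by unfold r8; infer_instance

lemma starFactor_dvd {n : ℕ} {r : Fin n → Fin n → Prop} (h : HasStarFactor r 4) :
    4 ∣ n := by
  obtain ⟨P, hstar, hdisj, huniv⟩ := h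
  have hcard : (P.biUnion id).card = ∑ S ∈ P, S.card := by
    apply Finset.card_biUnion
    intro x hx y hy hxy
    exact hdisj hx hy hxy
  rw [huniv, Finset.card_univ, Fintype.card_fin] at hcard
  have : ∑ S ∈ P, S.card = 4 * P.card := by
    rw [Finset.sum_congr rfl (fun S hS => (hstar S hS).1), Finset.sum_const,
      smul_eq_mul, mul_comm]
  exact ⟨P.card, hcard.trans this⟩

set_option maxRecDepth 10000 in
lemma r8_key : ∀ S : Finset (Fin 8), ¬ (IsMStar r8 4 S ∧ IsMStar r8 4 Sᶜ) := by
  unfold IsMStar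
  decide

theorem f_four_ge_twelve :
    (∀ n : ℕ, 1 ≤ n → n ≤ 11 →
      ∃ r : Fin n → Fin n → Prop, IsTournament r ∧ ¬ HasStarFactor r 4) ∧
    (∃ r : Fin 4 → Fin 4 → Prop, IsTournament r ∧
      ¬ ∃ c : Fin 4, ∀ v : Fin 4, v ≠ c → r c v) ∧
    (∃ r : Fin 8 → Fin 8 → Prop, IsTournament r ∧
      ¬ ∃ S₁ S₂ : Finset (Fin 8), IsMStar r 4 S₁ ∧ IsMStar r 4 S₂ ∧
          Disjoint S₁ S₂ ∧ S₁ ∪ S₂ = Finset.univ) := by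
  have h4tour : IsTournament r4 := by constructor <;> decide
  have h4nc : ¬ ∃ c : Fin 4, ∀ v : Fin 4, v ≠ c → r4 c v := by decide
  have h8tour : IsTournament r8 := by constructor <;> decide
  have h8 : ¬ ∃ S₁ S₂ : Finset (Fin 8), IsMStar r8 4 S₁ ∧ IsMStar r8 4 S₂ ∧
      Disjoint S₁ S₂ ∧ S₁ ∪ S₂ = Finset.univ := by
    rintro ⟨S₁, S₂, h₁, h₂, hd, hu⟩
    have hS₂ : S₂ = S₁ᶜ := by
      ext x
      simp only [Finset.mem_compl]
      constructor
      · intro hx hx'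
        exact (Finset.disjoint_left.mp hd) hx' hx
      · intro hx
        have : x ∈ S₁ ∪ S₂ := by rw [hu]; exact Finset.mem_univ x
        rcases Finset.mem_union.mp this with h | h
        · exact absurd h hx
        · exact h
    exact r8_key S₁ ⟨h₁, hS₂ ▸ h₂⟩
  refine ⟨?_, ⟨r4, h4tour, h4nc⟩, ⟨r8, h8tour, h8⟩⟩
  intro n h1 h11
  by_cases hn4 : n = 4
  · subst hn4
    refine ⟨r4, h4tour, ?_⟩
    rintro ⟨P, hstar, hdisj, huniv⟩
    have h0 : (0 : Fin 4) ∈ P.biUnion id := by rw [huniv]; exact Finset.mem_univ _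
    obtain ⟨S, hSP, hS0⟩ := Finset.mem_biUnion.mp h0
    have hScard : S.card = 4 := (hstar S hSP).1
    have hSuniv : S = Finset.univ := by
      apply Finset.eq_univ_of_card
      rw [hScard, Fintype.card_fin]
    obtain ⟨_, c, _, hc⟩ := hstar S hSP
    exact h4nc ⟨c, fun v hv => hc v (hSuniv ▸ Finset.mem_univ v) hv⟩
  by_cases hn8 : n = 8
  · subst hn8
    refine ⟨r8, h8tour, ?_⟩
    intro hsf
    obtain ⟨P, hstar, hdisj, huniv⟩ := hsf
    have hcard : (P.biUnion id).card = ∑ S ∈ P, S.card := by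
      apply Finset.card_biUnion
      intro x hx y hy hxy
      exact hdisj hx hy hxy
    rw [huniv, Finset.card_univ, Fintype.card_fin] at hcard
    have hsum : ∑ S ∈ P, S.card = 4 * P.card := by
      rw [Finset.sum_congr rfl (fun S hS => (hstar S hS).1), Finset.sum_const,
        smul_eq_mul, mul_comm]
    have hP2 : P.card = 2 := by omega
    obtain ⟨S₁, S₂, hne, hPeq⟩ := Finset.card_eq_two.mp hP2
    have h₁ : S₁ ∈ P := by rw [hPeq]; simp
    have h₂ : S₂ ∈ P := by rw [hPeq]; simp
    apply h8
    refine ⟨S₁, S₂, hstar S₁ h₁, hstar S₂ h₂, hdisj h₁ h₂ hne, ?_⟩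
    have : P.biUnion id = S₁ ∪ S₂ := by
      rw [hPeq]; simp [Finset.biUnion_insert]
    rw [← this, huniv]
  · refine ⟨fun u v => u < v, ⟨fun u v h h' => absurd (h.trans h') (lt_irrefl u),
      fun u v huv => lt_or_gt_of_ne huv⟩, ?_⟩
    intro hsf
    have := starFactor_dvd hsf
    omega
end

section
/- Let m ≥ 2. Let θ(m) denote the least positive integer N such that every tournament on N vertices contains a set of m vertices inducing a transitive subtournament. Then every tournament on m·⌈θ((m−1)·θ(m))/m⌉ vertices admits a partition of its vertex set into sets of size m, each of which induces a transitive subtournament. -/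
/-- A vertex set induces a transitive subtournament. -/
def TransOn {n : ℕ} (r : Fin n → Fin n → Prop) (S : Finset (Fin n)) : Prop :=
  ∀ u ∈ S, ∀ v ∈ S, ∀ w ∈ S, r u v → r v w → r u w

lemma transOn_subset {n : ℕ} {r : Fin n → Fin n → Prop} {S T : Finset (Fin n)}
    (h : S ⊆ T) (hT : TransOn r T) : TransOn r S :=
  fun u hu v hv w hw => hT u (h hu) v (h hv) w (h hw)

lemma transOn_insert_out {n : ℕ} {r : Fin n → Fin n → Prop} (hr : IsTournament r)
    {B : Finset (Fin n)} {v : Fin n} (hB : TransOn r B) (hv : ∀ b ∈ B, r v b) :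
    TransOn r (insert v B) := by
  intro u hu w hw x hx huw hwx
  rcases Finset.mem_insert.mp hu with rfl | hu'
  · rcases Finset.mem_insert.mp hx with rfl | hx'
    · rcases Finset.mem_insert.mp hw with rfl | hw'
      · exact huw
      · exact absurd hwx (hr.1 _ _ (hv _ hw'))
    · exact hv _ hx'
  · rcases Finset.mem_insert.mp hw with rfl | hw'
    · exact absurd huw (hr.1 _ _ (hv _ hu'))
    · rcases Finset.mem_insert.mp hx with rfl | hx'
      · exact absurd hwx (hr.1 _ _ (hv _ hw'))
      · exact hB u hu' w hw' x hx' huw hwx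

lemma transOn_insert_in {n : ℕ} {r : Fin n → Fin n → Prop} (hr : IsTournament r)
    {B : Finset (Fin n)} {v : Fin n} (hB : TransOn r B) (hv : ∀ b ∈ B, r b v) :
    TransOn r (insert v B) := by
  intro u hu w hw x hx huw hwx
  rcases Finset.mem_insert.mp hu with rfl | hu'
  · rcases Finset.mem_insert.mp hw with rfl | hw'
    · rcases Finset.mem_insert.mp hx with rfl | hx'
      · exact huw
      · exact absurd hwx (hr.1 _ _ (hv _ hx'))
    · exact absurd huw (hr.1 _ _ (hv _ hw'))
  · rcases Finset.mem_insert.mp hw with rfl | hw'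
    · rcases Finset.mem_insert.mp hx with rfl | hx'
      · exact hv _ hu'
      · exact absurd hwx (hr.1 _ _ (hv _ hx'))
    · rcases Finset.mem_insert.mp hx with rfl | hx'
      · exact hv _ hu'
      · exact hB u hu' w hw' x hx' huw hwx

lemma exists_trans_of_card {n j N : ℕ} {r : Fin n → Fin n → Prop} (hr : IsTournament r)
    (hN : ∀ r' : Fin N → Fin N → Prop, IsTournament r' →
      ∃ S : Finset (Fin N), S.card = j ∧ TransOn r' S)
    {A : Finset (Fin n)} (hA : N ≤ A.card) :
    ∃ S ⊆ A, S.card = j ∧ TransOn r S := by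
  obtain ⟨B, hBA, hBcard⟩ := Finset.exists_subset_card_eq hA
  let e : Fin N ≃ {x // x ∈ B} := (finCongr hBcard.symm).trans B.equivFin.symm
  let f : Fin N → Fin n := fun i => (e i : Fin n)
  have hf : Function.Injective f := Subtype.coe_injective.comp e.injective
  have hrt : IsTournament (fun a b => r (f a) (f b)) :=
    ⟨fun a b h => hr.1 _ _ h, fun a b hab => hr.2 _ _ fun h => hab (hf h)⟩
  obtain ⟨S', hS'card, hS'trans⟩ := hN _ hrt
  refine ⟨S'.image f, ?_, ?_, ?_⟩
  · intro x hx
    obtain ⟨a, _, rfl⟩ := Finset.mem_image.mp hx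
    exact hBA (e a).2
  · rw [Finset.card_image_of_injective _ hf, hS'card]
  · intro u hu v hv w hw huv hvw
    obtain ⟨a, ha, rfl⟩ := Finset.mem_image.mp hu
    obtain ⟨b, hb, rfl⟩ := Finset.mem_image.mp hv
    obtain ⟨c, hc, rfl⟩ := Finset.mem_image.mp hw
    exact hS'trans a ha b hb c hc huv hvw

lemma greedy_extract {n m k : ℕ} {r : Fin n → Fin n → Prop} (hm : 0 < m)
    (hk : ∀ A : Finset (Fin n), k ≤ A.card → ∃ S ⊆ A, S.card = m ∧ TransOn r S) :
    ∀ A : Finset (Fin n), ∃ P : Finset (Finset (Fin n)),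
      (∀ S ∈ P, S.card = m ∧ TransOn r S) ∧
      (P : Set (Finset (Fin n))).PairwiseDisjoint id ∧
      P.biUnion id ⊆ A ∧ (A \ P.biUnion id).card < k := by
  intro A
  induction A using Finset.strongInduction with
  | _ A ih =>
    by_cases hA : A.card < k
    · exact ⟨∅, by simp, by simp, by simp, by simpa using hA⟩
    · obtain ⟨S, hSA, hScard, hStrans⟩ := hk A (le_of_not_gt hA)
      have hSne : S.Nonempty := Finset.card_pos.mp (hScard ▸ hm)
      obtain ⟨P, hP1, hP2, hP3, hP4⟩ := ih (A \ S) (Finset.sdiff_ssubset hSA hSne)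
      have hdisj : ∀ T ∈ P, Disjoint S T := fun T hT =>
        (Finset.sdiff_disjoint.mono_left
          ((Finset.subset_biUnion_of_mem id hT).trans hP3)).symm
      refine ⟨insert S P, ?_, ?_, ?_, ?_⟩
      · intro T hT
        rcases Finset.mem_insert.mp hT with rfl | hT
        · exact ⟨hScard, hStrans⟩
        · exact hP1 T hT
      · rw [Finset.coe_insert]
        exact hP2.insert fun T hT _ => hdisj T hT
      · rw [Finset.biUnion_insert]
        exact Finset.union_subset hSA (hP3.trans Finset.sdiff_subset)
      · rw [Finset.biUnion_insert, id_eq]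
        have he : (A \ S) \ P.biUnion id = A \ (S ∪ P.biUnion id) := sdiff_sdiff A S _
        rw [← he]; exact hP4

lemma blocks_partition {n m : ℕ} (hm : 0 < m) :
    ∀ L : Finset (Fin n), m ∣ L.card →
    ∃ P : Finset (Finset (Fin n)),
      (∀ S ∈ P, S.card = m ∧ S ⊆ L) ∧
      (P : Set (Finset (Fin n))).PairwiseDisjoint id ∧ P.biUnion id = L := by
  intro L
  induction L using Finset.strongInduction with
  | _ L ih =>
    intro hdvd
    rcases Nat.eq_zero_or_pos L.card with h0 | hpos
    · exact ⟨∅, by simp, by simp, by simp [(Finset.card_eq_zero.mp h0).symm]⟩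
    · have hmL : m ≤ L.card := Nat.le_of_dvd hpos hdvd
      obtain ⟨B, hBL, hBcard⟩ := Finset.exists_subset_card_eq hmL
      have hBne : B.Nonempty := Finset.card_pos.mp (hBcard ▸ hm)
      obtain ⟨P, h1, h2, h3⟩ := ih (L \ B) (Finset.sdiff_ssubset hBL hBne)
        (by rw [Finset.card_sdiff_of_subset hBL, hBcard]; exact Nat.dvd_sub hdvd dvd_rfl)
      have hdisj : ∀ T ∈ P, Disjoint B T := fun T hT =>
        (Finset.sdiff_disjoint.mono_left
          (le_trans (Finset.subset_biUnion_of_mem id hT) h3.le)).symm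
      refine ⟨insert B P, ?_, ?_, ?_⟩
      · intro T hT
        rcases Finset.mem_insert.mp hT with rfl | hT
        · exact ⟨hBcard, hBL⟩
        · exact ⟨(h1 T hT).1, (h1 T hT).2.trans Finset.sdiff_subset⟩
      · rw [Finset.coe_insert]
        exact h2.insert fun T hT _ => hdisj T hT
      · rw [Finset.biUnion_insert, id_eq, h3, Finset.union_sdiff_of_subset hBL]

lemma matching_lemma {n m : ℕ} {r : Fin n → Fin n → Prop} (hr : IsTournament r) (hm : 2 ≤ m) :
    ∀ R T : Finset (Fin n), Disjoint R T → TransOn r T → (R.card + 1) * (m - 1) ≤ T.card →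
    ∃ P : Finset (Finset (Fin n)),
      (∀ S ∈ P, S.card = m ∧ TransOn r S) ∧
      (P : Set (Finset (Fin n))).PairwiseDisjoint id ∧
      R ⊆ P.biUnion id ∧ P.biUnion id ⊆ R ∪ T ∧ (P.biUnion id).card = R.card * m := by
  intro R
  induction R using Finset.induction_on with
  | empty => exact fun T _ _ _ => ⟨∅, by simp, by simp, by simp, by simp, by simp⟩
  | @insert v R hv ih =>
    intro T hdisj hT hcard
    have hvT : v ∉ T := Finset.disjoint_left.mp hdisj (Finset.mem_insert_self v R)
    have hRT : Disjoint R T := hdisj.mono_left (Finset.subset_insert v R)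
    have hcardi : (insert v R).card = R.card + 1 := Finset.card_insert_of_notMem hv
    -- find a homogeneous (m-1)-set B ⊆ T for v
    have hstar : ∃ B ⊆ T, B.card = m - 1 ∧ TransOn r (insert v B) ∧ v ∉ B := by
      classical
      set Out := T.filter (fun t => r v t) with hOut
      set Inn := T.filter (fun t => r t v) with hInn
      have hcover : T ⊆ Out ∪ Inn := by
        intro t ht
        have htv : t ≠ v := fun h => hvT (h ▸ ht)
        rcases hr.2 v t htv.symm with h | h
        · exact Finset.mem_union_left _ (Finset.mem_filter.mpr ⟨ht, h⟩)
        · exact Finset.mem_union_right _ (Finset.mem_filter.mpr ⟨ht, h⟩)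
      have hbig : m - 1 ≤ Out.card ∨ m - 1 ≤ Inn.card := by
        by_contra hcon
        push_neg at hcon
        have h1 : T.card ≤ Out.card + Inn.card :=
          le_trans (Finset.card_le_card hcover) (Finset.card_union_le _ _)
        have h2 : 2 * (m - 1) ≤ T.card := by
          calc 2 * (m - 1) ≤ (R.card + 1 + 1) * (m - 1) := by
                apply Nat.mul_le_mul_right; omega
            _ ≤ T.card := by rw [← hcardi]; exact hcard
        omega
      rcases hbig with hbig | hbig
      · obtain ⟨B, hBO, hBcard⟩ := Finset.exists_subset_card_eq hbig
        have hBT : B ⊆ T := hBO.trans (Finset.filter_subset _ _)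
        refine ⟨B, hBT, hBcard, ?_, fun h => hvT (hBT h)⟩
        exact transOn_insert_out hr (transOn_subset hBT hT)
          fun b hb => (Finset.mem_filter.mp (hBO hb)).2
      · obtain ⟨B, hBO, hBcard⟩ := Finset.exists_subset_card_eq hbig
        have hBT : B ⊆ T := hBO.trans (Finset.filter_subset _ _)
        refine ⟨B, hBT, hBcard, ?_, fun h => hvT (hBT h)⟩
        exact transOn_insert_in hr (transOn_subset hBT hT)
          fun b hb => (Finset.mem_filter.mp (hBO hb)).2
    obtain ⟨B, hBT, hBcard, hBtrans, hvB⟩ := hstar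
    have hScard : (insert v B).card = m := by
      rw [Finset.card_insert_of_notMem hvB, hBcard]; omega
    -- recurse
    have hTB : (T \ B).card = T.card - (m - 1) := by
      rw [Finset.card_sdiff_of_subset hBT, hBcard]
    have hrec : (R.card + 1) * (m - 1) ≤ (T \ B).card := by
      rw [hTB]
      have : (R.card + 1 + 1) * (m - 1) ≤ T.card := by rw [← hcardi]; exact hcard
      have h3 : (R.card + 1) * (m - 1) + (m - 1) = (R.card + 1 + 1) * (m - 1) := by ring
      omega
    obtain ⟨P, hP1, hP2, hP3, hP4, hP5⟩ := ih (T \ B)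
      (hRT.mono_right Finset.sdiff_subset) (transOn_subset Finset.sdiff_subset hT) hrec
    have hSdisj : Disjoint (insert v B) (R ∪ (T \ B)) := by
      rw [Finset.disjoint_union_right]
      constructor
      · rw [Finset.disjoint_left]
        intro x hx hxR
        rcases Finset.mem_insert.mp hx with rfl | hx
        · exact hv hxR
        · exact Finset.disjoint_left.mp hRT hxR (hBT hx)
      · rw [Finset.disjoint_left]
        intro x hx hxT
        rcases Finset.mem_insert.mp hx with rfl | hx
        · exact hvT (Finset.mem_sdiff.mp hxT).1
        · exact (Finset.mem_sdiff.mp hxT).2 hx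
    have hSdisjP : ∀ S' ∈ P, Disjoint (insert v B) S' := fun S' hS' =>
      hSdisj.mono_right ((Finset.subset_biUnion_of_mem id hS').trans hP4)
    refine ⟨insert (insert v B) P, ?_, ?_, ?_, ?_, ?_⟩
    · intro S hS
      rcases Finset.mem_insert.mp hS with rfl | hS
      · exact ⟨hScard, hBtrans⟩
      · exact hP1 S hS
    · rw [Finset.coe_insert]
      exact hP2.insert fun S hS _ => hSdisjP S hS
    · rw [Finset.biUnion_insert]
      intro x hx
      rcases Finset.mem_insert.mp hx with rfl | hx
      · exact Finset.mem_union_left _ (Finset.mem_insert_self _ _)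
      · exact Finset.mem_union_right _ (hP3 hx)
    · rw [Finset.biUnion_insert]
      apply Finset.union_subset
      · intro x hx
        rcases Finset.mem_insert.mp hx with rfl | hx
        · exact Finset.mem_union_left _ (Finset.mem_insert_self _ _)
        · exact Finset.mem_union_right _ (hBT hx)
      · refine hP4.trans (Finset.union_subset ?_ ?_)
        · exact (Finset.subset_insert v R).trans Finset.subset_union_left
        · exact Finset.sdiff_subset.trans Finset.subset_union_right
    · rw [Finset.biUnion_insert, id_eq,
        Finset.card_union_of_disjoint (hSdisj.mono_right hP4), hScard, hP5, hcardi]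
      ring

lemma finset_biUnion_union {α β : Type*} [DecidableEq α] [DecidableEq β]
    (s t : Finset α) (f : α → Finset β) :
    (s ∪ t).biUnion f = s.biUnion f ∪ t.biUnion f := by
  ext x
  simp only [Finset.mem_biUnion, Finset.mem_union, or_and_right, exists_or]

lemma main_aux {n : ℕ} (m : ℕ) (hm : 2 ≤ m) (θ : ℕ → ℕ)
    (hθ : ∀ j : ℕ, IsLeast {N : ℕ | 0 < N ∧
      ∀ r : Fin N → Fin N → Prop, IsTournament r →
        ∃ S : Finset (Fin N), S.card = j ∧ TransOn r S} (θ j))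
    (hmn : m ∣ n) (hn : θ ((m - 1) * θ m) ≤ n) :
    ∀ r : Fin n → Fin n → Prop, IsTournament r →
      ∃ P : Finset (Finset (Fin n)),
        (∀ S ∈ P, S.card = m ∧ TransOn r S) ∧
        (P : Set (Finset (Fin n))).PairwiseDisjoint id ∧
        P.biUnion id = Finset.univ := by
  intro rr hr
  classical
  have hm0 : 0 < m := by omega
  set K := (m - 1) * θ m with hK_def
  have hθm := (hθ m).1
  have hθK := (hθ K).1
  have hkpos : 0 < θ m := hθm.1
  have hcardU : (Finset.univ : Finset (Fin n)).card = n := by simp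
  -- the big transitive set T
  obtain ⟨T, hTu, hTcard, hTtrans⟩ :=
    exists_trans_of_card hr hθK.2 (A := (Finset.univ : Finset (Fin n)))
      (by rw [hcardU]; exact hn)
  have hext : ∀ A : Finset (Fin n), θ m ≤ A.card → ∃ S ⊆ A, S.card = m ∧ TransOn rr S :=
    fun A hA => exists_trans_of_card hr hθm.2 hA
  -- greedy extraction outside T
  obtain ⟨Pg, hg1, hg2, hg3, hg4⟩ := greedy_extract hm0 hext (Finset.univ \ T)
  set U := Pg.biUnion id with hU_def
  set R := (Finset.univ \ T) \ U with hR_def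
  set q := R.card with hq_def
  have hUcard : U.card = Pg.card * m := by
    rw [hU_def, Finset.card_biUnion
      (fun x hx y hy hxy => hg2 (Finset.mem_coe.mpr hx) (Finset.mem_coe.mpr hy) hxy)]
    simp only [id_eq]
    rw [Finset.sum_congr rfl fun S hS => (hg1 S hS).1, Finset.sum_const, smul_eq_mul]
  have hNsum : n = K + (q + U.card) := by
    have h1 := Finset.card_sdiff_add_card_eq_card hg3
    rw [← hR_def] at h1
    have h2 := Finset.card_sdiff_add_card_eq_card (Finset.subset_univ T)
    rw [hcardU, hTcard] at h2
    omega
  have hKq : m ∣ K + q := by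
    have h3 : K + q = n - U.card := by omega
    rw [h3]
    exact Nat.dvd_sub hmn ⟨Pg.card, by rw [hUcard, mul_comm]⟩
  -- matching the leftover R into T
  have hRT : Disjoint R T :=
    Disjoint.mono_left Finset.sdiff_subset Finset.sdiff_disjoint
  have hmatchcard : (q + 1) * (m - 1) ≤ T.card := by
    rw [hTcard, hK_def]
    calc (q + 1) * (m - 1) ≤ θ m * (m - 1) := Nat.mul_le_mul_right _ (by omega)
      _ = (m - 1) * θ m := mul_comm _ _
  obtain ⟨Pm, hm1, hm2, hm3, hm4, hm5⟩ := matching_lemma hr hm R T hRT hTtrans hmatchcard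
  rw [← hq_def] at hm5
  set V := Pm.biUnion id with hV_def
  set L := (R ∪ T) \ V with hL_def
  have hLT : L ⊆ T := by
    intro x hx
    obtain ⟨hx1, hx2⟩ := Finset.mem_sdiff.mp hx
    rcases Finset.mem_union.mp hx1 with h | h
    · exact absurd (hm3 h) hx2
    · exact h
  have hRTcard : (R ∪ T).card = q + K := by
    rw [Finset.card_union_of_disjoint hRT, hTcard]
  have hVLsum := Finset.card_sdiff_add_card_eq_card hm4
  rw [← hL_def] at hVLsum
  have hqm : q * m ≤ q + K := by
    have h1 : q * (m - 1) ≤ (q + 1) * (m - 1) := Nat.mul_le_mul_right _ (by omega)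
    have h2 : (q + 1) * (m - 1) ≤ K := by rw [← hTcard]; exact hmatchcard
    have h3 : q * m = q * (m - 1) + q := by
      calc q * m = q * ((m - 1) + 1) := by rw [Nat.sub_add_cancel (by omega)]
        _ = q * (m - 1) + q := by ring
    omega
  have hLcard : L.card = (K + q) - q * m := by omega
  have hLdvd : m ∣ L.card := by
    rw [hLcard]
    exact Nat.dvd_sub hKq (dvd_mul_left m q)
  obtain ⟨Pb, hb1, hb2, hb3⟩ := blocks_partition hm0 L hLdvd
  -- region disjointness
  have hUR : Disjoint U R := Finset.sdiff_disjoint.symm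
  have hUT : Disjoint U T :=
    Disjoint.mono_left hg3 Finset.sdiff_disjoint
  have hURT : Disjoint U (R ∪ T) := by
    rw [Finset.disjoint_union_right]; exact ⟨hUR, hUT⟩
  have hUV : Disjoint U V := hURT.mono_right hm4
  have hUL : Disjoint U L := hURT.mono_right Finset.sdiff_subset
  have hVL : Disjoint V L := Finset.sdiff_disjoint.symm
  have hsubU : ∀ S ∈ Pg, S ⊆ U := fun S hS => Finset.subset_biUnion_of_mem id hS
  have hsubV : ∀ S ∈ Pm, S ⊆ V := fun S hS => Finset.subset_biUnion_of_mem id hS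
  have hsubL : ∀ S ∈ Pb, S ⊆ L := fun S hS =>
    le_trans (Finset.subset_biUnion_of_mem id hS) hb3.le
  refine ⟨Pg ∪ Pm ∪ Pb, ?_, ?_, ?_⟩
  · intro S hS
    rcases Finset.mem_union.mp hS with hS | hS
    · rcases Finset.mem_union.mp hS with hS | hS
      · exact hg1 S hS
      · exact hm1 S hS
    · exact ⟨(hb1 S hS).1, transOn_subset ((hsubL S hS).trans hLT) hTtrans⟩
  · rw [Finset.coe_union, Set.pairwiseDisjoint_union]
    refine ⟨?_, hb2, ?_⟩
    · rw [Finset.coe_union, Set.pairwiseDisjoint_union]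
      refine ⟨hg2, hm2, ?_⟩
      intro i hi j hj _
      exact Disjoint.mono (hsubU i (Finset.mem_coe.mp hi)) (hsubV j (Finset.mem_coe.mp hj)) hUV
    · intro i hi j hj _
      rw [Finset.coe_union] at hi
      rcases hi with hi | hi
      · exact Disjoint.mono (hsubU i (Finset.mem_coe.mp hi)) (hsubL j (Finset.mem_coe.mp hj)) hUL
      · exact Disjoint.mono (hsubV i (Finset.mem_coe.mp hi)) (hsubL j (Finset.mem_coe.mp hj)) hVL
  · rw [finset_biUnion_union, finset_biUnion_union, hb3]
    have e2 : V ∪ L = R ∪ T := Finset.union_sdiff_of_subset hm4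
    have e3 : U ∪ R = Finset.univ \ T := Finset.union_sdiff_of_subset hg3
    calc U ∪ V ∪ L = U ∪ (V ∪ L) := Finset.union_assoc _ _ _
      _ = U ∪ (R ∪ T) := by rw [e2]
      _ = (U ∪ R) ∪ T := (Finset.union_assoc _ _ _).symm
      _ = (Finset.univ \ T) ∪ T := by rw [e3]
      _ = Finset.univ := Finset.sdiff_union_of_subset (Finset.subset_univ T)

theorem partition_into_transitive (m : ℕ) (hm : 2 ≤ m) (θ : ℕ → ℕ)
    (hθ : ∀ j : ℕ, IsLeast {N : ℕ | 0 < N ∧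
      ∀ r : Fin N → Fin N → Prop, IsTournament r →
        ∃ S : Finset (Fin N), S.card = j ∧ TransOn r S} (θ j)) :
    ∀ r : Fin (m * ⌈(θ ((m - 1) * θ m) : ℚ) / (m : ℚ)⌉₊) →
          Fin (m * ⌈(θ ((m - 1) * θ m) : ℚ) / (m : ℚ)⌉₊) → Prop,
      IsTournament r →
      ∃ P : Finset (Finset (Fin (m * ⌈(θ ((m - 1) * θ m) : ℚ) / (m : ℚ)⌉₊))),
        (∀ S ∈ P, S.card = m ∧ TransOn r S) ∧
        (P : Set (Finset (Fin (m * ⌈(θ ((m - 1) * θ m) : ℚ) / (m : ℚ)⌉₊)))).PairwiseDisjoint id ∧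
        P.biUnion id = Finset.univ := by
  have hm0 : 0 < m := by omega
  apply main_aux m hm θ hθ ⟨_, rfl⟩
  have h1 := Nat.le_ceil ((θ ((m - 1) * θ m) : ℚ) / (m : ℚ))
  rw [div_le_iff₀ (by exact_mod_cast hm0)] at h1
  have h2 : ((θ ((m - 1) * θ m) : ℕ) : ℚ) ≤
      (m : ℚ) * (⌈(θ ((m - 1) * θ m) : ℚ) / (m : ℚ)⌉₊ : ℚ) := by linarith
  exact_mod_cast h2
end

section
/- Every acyclic digraph D on n vertices occurs in every tournament on at least 2^{n−1} vertices: there is an injective map from the vertices of D to the vertices of the tournament such that every edge u→v of D is mapped to an edge of the tournament. -/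
/-!
Induction on the number of vertices of `D`. An acyclic digraph has a source `s`, and a tournament
on `N` vertices has a vertex `x` of out-degree at least `(N - 1) / 2`, since the out-degrees sum
to `N (N - 1) / 2`. Embed `D - s` into the out-neighbourhood of `x`, which has at least `2 ^ (n - 2)`
vertices, and send `s` to `x`: every edge leaving `s` then lands in an edge leaving `x`.
-/

open Finset Relation Function

theorem exists_card_le_two_mul_outdegree_add_one {W : Type*} [Fintype W] [Nonempty W]
    [DecidableEq W] {r : W → W → Prop} [DecidableRel r] (hr : ∀ u v, u ≠ v → r u v ∨ r v u) :
    ∃ x, Fintype.card W ≤ 2 * #{y | y ≠ x ∧ r x y} + 1 := by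
  let E : W → W → Prop := fun x y => y ≠ x ∧ r x y
  have hdeg (x : W) : Fintype.card W - 1 ≤ #{y | E x y} + #{y | E y x} := calc
    Fintype.card W - 1 = #{y | y ≠ x} := by
      rw [filter_ne', card_erase_of_mem (mem_univ x), card_univ]
    _ ≤ #(({y | E x y} : Finset W) ∪ ({y | E y x} : Finset W)) := by
      refine card_le_card fun y hy => ?_
      simp only [mem_filter, mem_univ, true_and, mem_union] at hy ⊢
      rcases hr x y (Ne.symm hy) with h | h
      exacts [.inl ⟨hy, h⟩, .inr ⟨Ne.symm hy, h⟩]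
    _ ≤ _ := card_union_le _ _
  have hsum : ∑ _x : W, (Fintype.card W - 1) ≤ ∑ x : W, 2 * #{y | E x y} := calc
    _ ≤ ∑ x : W, (#{y | E x y} + #{y | E y x}) := sum_le_sum fun x _ => hdeg x
    _ = ∑ x : W, 2 * #{y | E x y} := by
      have hdouble := sum_card_bipartiteAbove_eq_sum_card_bipartiteBelow (s := univ) (t := univ) E
      simp only [bipartiteAbove, bipartiteBelow] at hdouble
      simp only [sum_add_distrib, ← hdouble, two_mul]
  obtain ⟨x, -, hx⟩ := exists_le_of_sum_le univ_nonempty hsum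
  exact ⟨x, Nat.le_add_of_sub_le hx⟩

theorem exists_forall_not_rel_of_acyclic {V : Type*} [Finite V] [Nonempty V] {D : V → V → Prop}
    (hD : ∀ v, ¬ TransGen D v v) : ∃ s, ∀ u, ¬ D u s := by
  have : IsTrans V (TransGen D) := ⟨fun _ _ _ => TransGen.trans⟩
  have : Std.Irrefl (TransGen D) := ⟨hD⟩
  obtain ⟨s, -, hs⟩ := (Finite.wellFounded_of_trans_of_irrefl (TransGen D)).has_min Set.univ
    ⟨Classical.arbitrary V, trivial⟩
  exact ⟨s, fun u hu => hs u trivial (.single hu)⟩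

section Embedding

variable {V W : Type*} {D : V → V → Prop} {r : W → W → Prop}

theorem exists_injective_relHom_insert_source {s : V} {x : W} (hs : ∀ u, ¬ D u s)
    (f : Subrel D (· ≠ s) →r Subrel r (fun w => w ≠ x ∧ r x w)) (hf : Injective f) :
    ∃ g : D →r r, Injective g := by
  classical
  let g (v : V) : W := if h : v = s then x else f ⟨v, h⟩
  have hg_source : g s = x := dif_pos rfl
  have hg (v : V) (hv : v ≠ s) : g v = f ⟨v, hv⟩ := dif_neg hv
  have hg_rel {u v : V} (huv : D u v) : r (g u) (g v) := by
    have hv : v ≠ s := fun hv => hs u (hv ▸ huv)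
    rw [hg v hv]
    by_cases hu : u = s
    · subst hu
      rw [hg_source]
      exact (f ⟨v, hv⟩).2.2
    · rw [hg u hu]
      exact f.map_rel (a := ⟨u, hu⟩) (b := ⟨v, hv⟩) huv
  have hg_inj : Injective g := by
    intro u v huv
    by_cases hu : u = s <;> by_cases hv : v = s
    · rw [hu, hv]
    · subst hu
      rw [hg_source, hg v hv] at huv
      exact absurd huv.symm (f ⟨v, hv⟩).2.1
    · subst hv
      rw [hg_source, hg u hu] at huv
      exact absurd huv (f ⟨u, hu⟩).2.1
    · rw [hg u hu, hg v hv] at huv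
      exact congrArg Subtype.val (hf (Subtype.ext huv))
  exact ⟨⟨g, hg_rel⟩, hg_inj⟩

/-- `2 ^ |V| ≤ 2 |W| + 1` is `2 ^ (|V| - 1) ≤ |W|` without truncated subtraction, which lets the
induction step cover a single vertex sent into an empty out-neighbourhood. -/
theorem exists_injective_relHom_of_acyclic [Fintype V] [Fintype W]
    (hD : ∀ v, ¬ TransGen D v v) (hr : ∀ u v, u ≠ v → r u v ∨ r v u)
    (hcard : 2 ^ Fintype.card V ≤ 2 * Fintype.card W + 1) : ∃ f : D →r r, Injective f := by
  classical
  induction hV : Fintype.card V generalizing V W with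
  | zero =>
    have : IsEmpty V := Fintype.card_eq_zero_iff.mp hV
    exact ⟨⟨isEmptyElim, fun {a} => isEmptyElim a⟩, fun a => isEmptyElim a⟩
  | succ m ih =>
    have : Nonempty V := Fintype.card_pos_iff.mp (by omega)
    obtain ⟨s, hs⟩ := exists_forall_not_rel_of_acyclic hD
    have hW : 2 ^ m ≤ Fintype.card W := by rw [hV, pow_succ] at hcard; omega
    have : Nonempty W := Fintype.card_pos_iff.mp (lt_of_lt_of_le (Nat.two_pow_pos m) hW)
    obtain ⟨x, hx⟩ := exists_card_le_two_mul_outdegree_add_one hr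
    have hD' : ∀ v, ¬ TransGen (Subrel D (· ≠ s)) v v := fun v hv =>
      hD v (hv.lift Subtype.val fun _ _ h => h)
    have hr' : ∀ u v, u ≠ v → Subrel r (fun w => w ≠ x ∧ r x w) u v ∨ Subrel r _ v u :=
      fun u v huv => hr u v (Subtype.coe_ne_coe.mpr huv)
    have hV' : Fintype.card {v // v ≠ s} = m := by simp [hV]
    have hW' : Fintype.card {w // w ≠ x ∧ r x w} = #{y | y ≠ x ∧ r x y} := Fintype.card_subtype _
    obtain ⟨f, hf⟩ := ih hD' hr' (by rw [hV', hW']; omega) hV'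
    exact exists_injective_relHom_insert_source hs f hf

end Embedding

theorem acyclic_digraph_in_tournament (n N : ℕ) (D : Fin n → Fin n → Prop)
    (hacyc : ∀ v : Fin n, ¬ Relation.TransGen D v v)
    (hN : 2 ^ (n - 1) ≤ N)
    (r : Fin N → Fin N → Prop) (hr : IsTournament r) :
    ∃ f : Fin n → Fin N, Function.Injective f ∧ ∀ u v : Fin n, D u v → r (f u) (f v) := by
  have hcard : 2 ^ Fintype.card (Fin n) ≤ 2 * Fintype.card (Fin N) + 1 := by
    rcases n with _ | n
    · simp
    · rw [Fintype.card_fin, Fintype.card_fin, pow_succ]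
      simp only [Nat.add_sub_cancel] at hN
      omega
  obtain ⟨f, hf⟩ := exists_injective_relHom_of_acyclic hacyc hr.2 hcard
  exact ⟨f, hf, fun _ _ => f.map_rel⟩
end

section
/- For every m ≥ 2, every finite tournament contains a family of pairwise disjoint m-stars whose union covers all but at most 2m − 3 of the vertices. -/
open Classical Finset in
lemma exists_center {n m : ℕ} (r : Fin n → Fin n → Prop) (hm : 2 ≤ m)
    (hr : IsTournament r) (A : Finset (Fin n)) (hA : 2 * m - 2 ≤ A.card) :
    ∃ c ∈ A, m - 1 ≤ (A.filter (fun v => r c v)).card := by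
  by_contra h
  push_neg at h
  have hsum : ∑ c ∈ A, (A.filter (fun v => r c v)).card ≤ A.card * (m - 2) := by
    calc ∑ c ∈ A, (A.filter fun v => r c v).card ≤ ∑ _c ∈ A, (m - 2) :=
          Finset.sum_le_sum fun c hc => by have := h c hc; omega
      _ = A.card * (m - 2) := by rw [Finset.sum_const, smul_eq_mul]
  set T := (A ×ˢ A).filter (fun p => r p.1 p.2) with hT
  set T' := (A ×ˢ A).filter (fun p => r p.2 p.1) with hT'
  have hTcard : T.card = ∑ c ∈ A, (A.filter fun v => r c v).card := by
    rw [hT, Finset.card_filter, Finset.sum_product]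
    exact Finset.sum_congr rfl fun c _ => (Finset.card_filter _ _).symm
  have hswap : T.card = T'.card := by
    apply Finset.card_bij (fun p _ => (p.2, p.1))
    · intro p hp
      simp only [hT, hT', Finset.mem_filter, Finset.mem_product] at hp ⊢
      tauto
    · intro p hp q hq hpq
      simp only [Prod.mk.injEq] at hpq
      exact Prod.ext hpq.2 hpq.1
    · intro p hp
      refine ⟨(p.2, p.1), ?_, rfl⟩
      simp only [hT, hT', Finset.mem_filter, Finset.mem_product] at hp ⊢
      tauto
  have hdisj : Disjoint T T' := by
    rw [Finset.disjoint_left]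
    intro p hp hp'
    simp only [hT, hT', Finset.mem_filter] at hp hp'
    exact hr.1 _ _ hp.2 hp'.2
  have hunion : T ∪ T' = A.offDiag := by
    ext p
    simp only [hT, hT', Finset.mem_union, Finset.mem_filter, Finset.mem_product,
      Finset.mem_offDiag]
    constructor
    · rintro (⟨⟨h1, h2⟩, h3⟩ | ⟨⟨h1, h2⟩, h3⟩)
      · exact ⟨h1, h2, fun e => hr.1 _ _ h3 (e ▸ h3)⟩
      · exact ⟨h1, h2, fun e => hr.1 _ _ h3 (e ▸ h3)⟩
    · rintro ⟨h1, h2, h3⟩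
      rcases hr.2 _ _ h3 with h | h <;> tauto
  have hcount : 2 * T.card = A.card * A.card - A.card := by
    have := Finset.card_union_of_disjoint hdisj
    rw [hunion, Finset.offDiag_card] at this
    omega
  have hApos : 0 < A.card := by omega
  have e2 : A.card * (A.card - 1) = A.card * A.card - A.card := by
    rcases A.card with _ | k
    · simp
    · simp only [Nat.succ_sub_one, Nat.mul_succ]
      omega
  have key : A.card * A.card - A.card ≤ 2 * (A.card * (m - 2)) := by omega
  have e1 : 2 * (A.card * (m - 2)) = A.card * (2 * (m - 2)) := by ring
  have h2 : A.card * (2 * m - 3) ≤ A.card * (A.card - 1) :=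
    Nat.mul_le_mul_left _ (by omega)
  have hchain : A.card * (2 * m - 3) ≤ A.card * (2 * (m - 2)) := by omega
  have := Nat.le_of_mul_le_mul_left hchain hApos
  omega

open Classical Finset in
lemma greedy_aux {n m : ℕ} (r : Fin n → Fin n → Prop) (hm : 2 ≤ m)
    (hr : IsTournament r) (A : Finset (Fin n)) :
    ∃ P : Finset (Finset (Fin n)), (∀ S ∈ P, IsMStar r m S) ∧
      (P : Set (Finset (Fin n))).PairwiseDisjoint id ∧
      P.biUnion id ⊆ A ∧ (A \ P.biUnion id).card ≤ 2 * m - 3 := by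
  induction A using Finset.strongInduction with
  | _ A ih =>
    by_cases hA : A.card ≤ 2 * m - 3
    · exact ⟨∅, by simp, by simp, by simp, by simpa using hA⟩
    · have hA' : 2 * m - 2 ≤ A.card := by omega
      obtain ⟨c, hc, hdeg⟩ := exists_center r hm hr A hA'
      obtain ⟨B, hBsub, hBcard⟩ := Finset.exists_subset_card_eq hdeg
      have hcB : c ∉ B := by
        intro h
        exact hr.1 c c (Finset.mem_filter.mp (hBsub h)).2 (Finset.mem_filter.mp (hBsub h)).2
      set S := insert c B with hS
      have hSA : S ⊆ A := by
        intro v hv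
        rcases Finset.mem_insert.mp hv with rfl | hv
        · exact hc
        · exact (Finset.mem_filter.mp (hBsub hv)).1
      have hScard : S.card = m := by
        rw [hS, Finset.card_insert_of_notMem hcB, hBcard]; omega
      have hstar : IsMStar r m S := by
        refine ⟨hScard, c, Finset.mem_insert_self _ _, ?_⟩
        intro v hv hvc
        rcases Finset.mem_insert.mp hv with rfl | hv
        · exact absurd rfl hvc
        · exact (Finset.mem_filter.mp (hBsub hv)).2
      have hssub : A \ S ⊂ A := by
        apply Finset.sdiff_ssubset hSA
        exact ⟨c, Finset.mem_insert_self _ _⟩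
      obtain ⟨P, hP1, hP2, hP3, hP4⟩ := ih (A \ S) hssub
      have hdisjS : ∀ T ∈ P, Disjoint S T := by
        intro T hT
        rw [Finset.disjoint_right]
        intro v hvT hvS
        have : v ∈ A \ S := hP3 (Finset.mem_biUnion.mpr ⟨T, hT, hvT⟩)
        exact (Finset.mem_sdiff.mp this).2 hvS
      refine ⟨insert S P, ?_, ?_, ?_, ?_⟩
      · intro T hT
        rcases Finset.mem_insert.mp hT with rfl | hT
        · exact hstar
        · exact hP1 T hT
      · rw [Finset.coe_insert]
        apply hP2.insert
        intro T hT _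
        exact hdisjS T hT
      · rw [Finset.biUnion_insert]
        apply Finset.union_subset hSA
        exact hP3.trans (Finset.sdiff_subset)
      · have : A \ (S ∪ P.biUnion id) = (A \ S) \ P.biUnion id := by
          ext v; simp [Finset.mem_sdiff]; tauto
        simp only [Finset.biUnion_insert, id]
        rw [this]
        exact hP4

theorem greedy_star_packing (m n : ℕ) (hm : 2 ≤ m)
    (r : Fin n → Fin n → Prop) (hr : IsTournament r) :
    ∃ P : Finset (Finset (Fin n)), (∀ S ∈ P, IsMStar r m S) ∧
      (P : Set (Finset (Fin n))).PairwiseDisjoint id ∧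
      (Finset.univ \ P.biUnion id).card ≤ 2 * m - 3 := by
  obtain ⟨P, h1, h2, _, h4⟩ := greedy_aux r hm hr Finset.univ
  exact ⟨P, h1, h2, h4⟩
end
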